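/- arXiv:1505.07807 — 3 statements merged into one kernel-verified Lean document; each statement's English description precedes it below -/
import Mathlib

section
/- Let (X,d) be a pseudometric space with integer-valued pseudometric and let S be the set of all d-splits of X. Then there exists a split-prime pseudometric d₀ on X (i.e. α^{d₀}_S = 0 for every split S of X) such that for all x,y ∈ X, d(x,y) = d₀(x,y) + ∑_{S ∈ S} α^d_S δ_S(x,y), where for each pair x,y only finitely many summands are nonzero. -/
open Set Function

noncomputable section

variable {X : Type*}

/-- `d` is a pseudometric on `X`. -/
def IsPseudometric (d : X → X → ℝ) : Prop :=
  (∀ x, d x x = 0) ∧ (∀ x y, d x y = d y x) ∧ ∀ x y z, d x z ≤ d x y + d y z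

/-- `d` is a metric on `X`. -/
def IsMetric (d : X → X → ℝ) : Prop :=
  IsPseudometric d ∧ ∀ x y, d x y = 0 → x = y

/-- `d` is integer-valued. -/
def IsIntegerValued (d : X → X → ℝ) : Prop := ∀ x y, ∃ n : ℤ, d x y = (n : ℝ)

/-- The quantity `β^d` associated to the four points `a, a', b, b'`. -/
def betaIdx (d : X → X → ℝ) (a a' b b' : X) : ℝ :=
  (max (max (d a b + d a' b') (d a' b + d a b')) (d a a' + d b b') - d a a' - d b b') / 2

/-- The isolation index `α^d_{{A,B}}` of the pair `{A,B}`. -/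
def isolIdx (d : X → X → ℝ) (A B : Set X) : ℝ :=
  sInf {r : ℝ | ∃ a ∈ A, ∃ a' ∈ A, ∃ b ∈ B, ∃ b' ∈ B, r = betaIdx d a a' b b'}

/-- `{A, B}` is a partial split of `X`. -/
def IsPartialSplit (A B : Set X) : Prop := A.Nonempty ∧ B.Nonempty ∧ Disjoint A B

/-- `{A, B}` is a split of `X`. -/
def IsSplit (A B : Set X) : Prop := IsPartialSplit A B ∧ A ∪ B = univ

/-- `{A, B}` is a `d`-split of `X`. -/
def IsDSplit (d : X → X → ℝ) (A B : Set X) : Prop := IsSplit A B ∧ 0 < isolIdx d A B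

open Classical in
/-- The split pseudometric `δ_S` of the split `{A, Aᶜ}`. -/
def splitDist (A : Set X) (x y : X) : ℝ := if x ∈ A ↔ y ∈ A then 0 else 1

/-! ### Basic lemmas -/

lemma beta_nonneg (d : X → X → ℝ) (a a' b b' : X) : 0 ≤ betaIdx d a a' b b' := by
  have h : d a a' + d b b' ≤ max (max (d a b + d a' b') (d a' b + d a b')) (d a a' + d b b') :=
    le_max_right _ _
  unfold betaIdx; linarith

lemma beta_swap (d : X → X → ℝ) (hsym : ∀ x y, d x y = d y x) (a a' b b' : X) :
    betaIdx d a a' b b' = betaIdx d b b' a a' := by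
  unfold betaIdx
  rw [hsym b a, hsym b' a', hsym b' a, hsym b a']
  rw [add_comm (d a b') (d a' b), add_comm (d b b') (d a a')]
  ring_nf

lemma isol_bddBelow (d : X → X → ℝ) (A B : Set X) :
    BddBelow {r : ℝ | ∃ a ∈ A, ∃ a' ∈ A, ∃ b ∈ B, ∃ b' ∈ B, r = betaIdx d a a' b b'} := by
  refine ⟨0, fun r hr => ?_⟩
  obtain ⟨a, _, a', _, b, _, b', _, rfl⟩ := hr
  exact beta_nonneg d a a' b b'

lemma isol_le_beta (d : X → X → ℝ) {A B : Set X} {a a' b b' : X}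
    (ha : a ∈ A) (ha' : a' ∈ A) (hb : b ∈ B) (hb' : b' ∈ B) :
    isolIdx d A B ≤ betaIdx d a a' b b' :=
  csInf_le (isol_bddBelow d A B) ⟨a, ha, a', ha', b, hb, b', hb', rfl⟩

lemma isol_nonneg (d : X → X → ℝ) {A B : Set X} (hA : A.Nonempty) (hB : B.Nonempty) :
    0 ≤ isolIdx d A B := by
  obtain ⟨a, ha⟩ := hA; obtain ⟨b, hb⟩ := hB
  refine le_csInf ⟨_, a, ha, a, ha, b, hb, b, hb, rfl⟩ ?_
  rintro r ⟨a, _, a', _, b, _, b', _, rfl⟩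
  exact beta_nonneg d a a' b b'

lemma isol_symm (d : X → X → ℝ) (hsym : ∀ x y, d x y = d y x) (A B : Set X) :
    isolIdx d A B = isolIdx d B A := by
  unfold isolIdx
  congr 1
  ext r
  constructor
  · rintro ⟨a, ha, a', ha', b, hb, b', hb', rfl⟩
    exact ⟨b, hb, b', hb', a, ha, a', ha', beta_swap d hsym a a' b b'⟩
  · rintro ⟨b, hb, b', hb', a, ha, a', ha', rfl⟩
    exact ⟨a, ha, a', ha', b, hb, b', hb', beta_swap d hsym b b' a a'⟩

lemma isol_compl (d : X → X → ℝ) (hsym : ∀ x y, d x y = d y x) (A : Set X) :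
    isolIdx d Aᶜ Aᶜᶜ = isolIdx d A Aᶜ := by
  rw [compl_compl, isol_symm d hsym]

lemma splitDist_self (A : Set X) (x : X) : splitDist A x x = 0 := by
  classical
  unfold splitDist; rw [if_pos Iff.rfl]

lemma splitDist_symm (A : Set X) (x y : X) : splitDist A x y = splitDist A y x := by
  classical
  unfold splitDist
  exact if_congr Iff.comm rfl rfl

lemma splitDist_compl (A : Set X) (x y : X) : splitDist Aᶜ x y = splitDist A x y := by
  unfold splitDist
  by_cases hx : x ∈ A <;> by_cases hy : y ∈ A <;> simp [hx, hy]

lemma splitDist_of_iff {A : Set X} {x y : X} (h : x ∈ A ↔ y ∈ A) : splitDist A x y = 0 :=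
  if_pos h

lemma splitDist_of_not_iff {A : Set X} {x y : X} (h : ¬(x ∈ A ↔ y ∈ A)) : splitDist A x y = 1 :=
  if_neg h

lemma pseudometric_nonneg {d : X → X → ℝ} (hd : IsPseudometric d) (x y : X) : 0 ≤ d x y := by
  have h1 := hd.1 x
  have h2 := hd.2.1 x y
  have h3 := hd.2.2 x y x
  linarith

lemma split_compl_eq {A B : Set X} (h : IsSplit A B) : B = Aᶜ := by
  obtain ⟨⟨_, _, hdisj⟩, hcov⟩ := h
  apply subset_antisymm
  · exact fun x hxB hxA => (hdisj.ne_of_mem hxA hxB) rfl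
  · intro x hx
    rcases (eq_univ_iff_forall.mp hcov x) with h | h
    · exact absurd h hx
    · exact h

/-! ### The five-point lemma -/

lemma five_pt (d : X → X → ℝ) (hsym : ∀ x y, d x y = d y x) (c c' e e' z : X) (α α' : ℝ)
    (hα : 0 < α) (hα' : 0 < α')
    (h1 : α ≤ betaIdx d c c' e z)
    (h2 : α ≤ betaIdx d c c' e' z)
    (h3 : α' ≤ betaIdx d c z e e')
    (h4 : α' ≤ betaIdx d c' z e e') :
    d c c' + d e e' + (2*α + 2*α') ≤ max (d c e + d c' e') (d c' e + d c e') := by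
  have he : d z e = d e z := hsym z e
  have he' : d z e' = d e' z := hsym z e'
  unfold betaIdx at h1 h2 h3 h4
  have H1 : 2*α + (d c c' + d e z) ≤ max (d c e + d c' z) (d c' e + d c z) :=
    Or.resolve_right (le_max_iff.1 (by linarith [h1] :
      2*α + (d c c' + d e z) ≤ max (max (d c e + d c' z) (d c' e + d c z)) (d c c' + d e z)))
      (not_le.mpr (by linarith))
  have H2 : 2*α + (d c c' + d e' z) ≤ max (d c e' + d c' z) (d c' e' + d c z) :=
    Or.resolve_right (le_max_iff.1 (by linarith [h2] :
      2*α + (d c c' + d e' z) ≤ max (max (d c e' + d c' z) (d c' e' + d c z)) (d c c' + d e' z)))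
      (not_le.mpr (by linarith))
  have H3 : 2*α' + (d c z + d e e') ≤ max (d c e + d z e') (d z e + d c e') :=
    Or.resolve_right (le_max_iff.1 (by linarith [h3] :
      2*α' + (d c z + d e e') ≤ max (max (d c e + d z e') (d z e + d c e')) (d c z + d e e')))
      (not_le.mpr (by linarith))
  have H4 : 2*α' + (d c' z + d e e') ≤ max (d c' e + d z e') (d z e + d c' e') :=
    Or.resolve_right (le_max_iff.1 (by linarith [h4] :
      2*α' + (d c' z + d e e') ≤ max (max (d c' e + d z e') (d z e + d c' e')) (d c' z + d e e')))
      (not_le.mpr (by linarith))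
  rw [le_max_iff]
  rcases le_max_iff.1 H1 with h1' | h1' <;>
  rcases le_max_iff.1 H2 with h2' | h2' <;>
  rcases le_max_iff.1 H3 with h3' | h3' <;>
  rcases le_max_iff.1 H4 with h4' | h4' <;>
  rcases le_total (d c e + d c' e') (d c' e + d c e') with hm | hm <;>
  first
    | (left; linarith)
    | (right; linarith)

/-! ### Trimming helper lemmas -/

lemma max3_le_div {A1 A2 A3 B x y u v : ℝ} (h1 : A1 ≤ B - u - v + x + y)
    (h2 : A2 ≤ B - u - v + x + y) (h3 : A3 ≤ B - u - v + x + y) :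
    (max (max A1 A2) A3 - x - y)/2 ≤ (B - u - v)/2 := by
  have := max_le (max_le h1 h2) h3; linarith

lemma le_beta_shape {g A1 A2 A3 x y : ℝ} (h : g*2 + x + y ≤ max (max A1 A2) A3) :
    g ≤ (max (max A1 A2) A3 - x - y)/2 := by linarith

lemma cross_bound1 (d : X → X → ℝ) (hsym : ∀ x y, d x y = d y x) {A : Set X} {t : ℝ}
    (ht0 : 0 ≤ t) (htα : t ≤ isolIdx d A Aᶜ) {p p' q q' : X}
    (hp : p ∈ A) (hq : q ∈ A) (hp' : p' ∉ A) (hq' : q' ∉ A) :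
    d p q + d p' q' + 2*t ≤ max (max (d p q + d p' q') (d p' q + d p q')) (d p p' + d q q') := by
  have hβ : t ≤ betaIdx d p q p' q' :=
    le_trans htα (isol_le_beta d hp hq (Set.mem_compl hp') (Set.mem_compl hq'))
  unfold betaIdx at hβ
  have h : d p q + d p' q' + 2*t ≤ max (max (d p p' + d q q') (d q p' + d p q')) (d p q + d p' q') := by
    linarith
  rcases le_max_iff.1 h with h | h
  · rcases le_max_iff.1 h with h | h
    · exact le_trans h (le_max_right _ _)
    · rw [hsym q p'] at h
      exact le_trans h ((le_max_right _ _).trans (le_max_left _ _))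
  · exact le_trans (by linarith) ((le_max_left _ _).trans (le_max_left _ _))

lemma cross_bound2 (d : X → X → ℝ) (hsym : ∀ x y, d x y = d y x) {A : Set X} {t : ℝ}
    (ht0 : 0 ≤ t) (htα : t ≤ isolIdx d A Aᶜ) {p p' q q' : X}
    (hp : p ∈ A) (hq' : q' ∈ A) (hp' : p' ∉ A) (hq : q ∉ A) :
    d p' q + d p q' + 2*t ≤ max (max (d p q + d p' q') (d p' q + d p q')) (d p p' + d q q') := by
  have hβ : t ≤ betaIdx d p q' p' q :=
    le_trans htα (isol_le_beta d hp hq' (Set.mem_compl hp') (Set.mem_compl hq))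
  unfold betaIdx at hβ
  have h : d p q' + d p' q + 2*t ≤ max (max (d p p' + d q' q) (d q' p' + d p q)) (d p q' + d p' q) := by
    linarith
  rcases le_max_iff.1 h with h | h
  · rcases le_max_iff.1 h with h | h
    · rw [hsym q' q] at h
      exact le_trans (by linarith) (le_max_right _ _)
    · rw [hsym q' p'] at h
      exact le_trans (by linarith) ((le_max_left _ _).trans (le_max_left _ _))
  · exact le_trans (by linarith) ((le_max_right _ _).trans (le_max_left _ _))

lemma tri_bound (d : X → X → ℝ) (hd : IsPseudometric d) {A : Set X} {t : ℝ}
    (htα : t ≤ isolIdx d A Aᶜ) {x y z : X}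
    (hx : x ∈ A) (hz : z ∈ A) (hy : y ∉ A) :
    d x z + 2*t ≤ d x y + d y z := by
  have hβ : t ≤ betaIdx d x z y y :=
    le_trans htα (isol_le_beta d hx hz (Set.mem_compl hy) (Set.mem_compl hy))
  unfold betaIdx at hβ
  have h0 : d y y = 0 := hd.1 y
  have hs : d z y = d y z := hd.2.1 z y
  have htri := hd.2.2 x y z
  have h : d x z + d y y + 2*t ≤ max (max (d x y + d z y) (d z y + d x y)) (d x z + d y y) := by
    linarith
  rcases le_max_iff.1 h with h | h
  · rcases le_max_iff.1 h with h | h <;> linarith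
  · linarith


lemma trim_beta_le (d : X → X → ℝ) (hsym : ∀ x y, d x y = d y x) {A : Set X} {t : ℝ}
    (ht0 : 0 ≤ t) (htα : t ≤ isolIdx d A Aᶜ) (p p' q q' : X) :
    betaIdx (fun u v => d u v - t * splitDist A u v) p p' q q' ≤ betaIdx d p p' q q' := by
  have htαc : t ≤ isolIdx d Aᶜ Aᶜᶜ := by rw [isol_compl d hsym]; exact htα
  have F1 : d p q + d p' q' ≤ max (max (d p q + d p' q') (d p' q + d p q')) (d p p' + d q q') :=
    (le_max_left _ _).trans (le_max_left _ _)
  have F2 : d p' q + d p q' ≤ max (max (d p q + d p' q') (d p' q + d p q')) (d p p' + d q q') :=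
    (le_max_right _ _).trans (le_max_left _ _)
  have F3 : d p p' + d q q' ≤ max (max (d p q + d p' q') (d p' q + d p q')) (d p p' + d q q') :=
    le_max_right _ _
  by_cases hp : p ∈ A <;> by_cases hp' : p' ∈ A <;> by_cases hq : q ∈ A <;> by_cases hq' : q' ∈ A
  · have e0 : splitDist A p q = 0 := splitDist_of_iff (iff_of_true hp hq)
    have e1 : splitDist A p' q' = 0 := splitDist_of_iff (iff_of_true hp' hq')
    have e2 : splitDist A p' q = 0 := splitDist_of_iff (iff_of_true hp' hq)
    have e3 : splitDist A p q' = 0 := splitDist_of_iff (iff_of_true hp hq')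
    have e4 : splitDist A p p' = 0 := splitDist_of_iff (iff_of_true hp hp')
    have e5 : splitDist A q q' = 0 := splitDist_of_iff (iff_of_true hq hq')
    simp only [betaIdx, e0, e1, e2, e3, e4, e5, mul_zero, mul_one, sub_zero]
    exact max3_le_div (by linarith) (by linarith) (by linarith)
  · have e0 : splitDist A p q = 0 := splitDist_of_iff (iff_of_true hp hq)
    have e1 : splitDist A p' q' = 1 := splitDist_of_not_iff (by simp [hp', hq'])
    have e2 : splitDist A p' q = 0 := splitDist_of_iff (iff_of_true hp' hq)
    have e3 : splitDist A p q' = 1 := splitDist_of_not_iff (by simp [hp, hq'])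
    have e4 : splitDist A p p' = 0 := splitDist_of_iff (iff_of_true hp hp')
    have e5 : splitDist A q q' = 1 := splitDist_of_not_iff (by simp [hq, hq'])
    simp only [betaIdx, e0, e1, e2, e3, e4, e5, mul_zero, mul_one, sub_zero]
    exact max3_le_div (by linarith) (by linarith) (by linarith)
  · have e0 : splitDist A p q = 1 := splitDist_of_not_iff (by simp [hp, hq])
    have e1 : splitDist A p' q' = 0 := splitDist_of_iff (iff_of_true hp' hq')
    have e2 : splitDist A p' q = 1 := splitDist_of_not_iff (by simp [hp', hq])
    have e3 : splitDist A p q' = 0 := splitDist_of_iff (iff_of_true hp hq')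
    have e4 : splitDist A p p' = 0 := splitDist_of_iff (iff_of_true hp hp')
    have e5 : splitDist A q q' = 1 := splitDist_of_not_iff (by simp [hq, hq'])
    simp only [betaIdx, e0, e1, e2, e3, e4, e5, mul_zero, mul_one, sub_zero]
    exact max3_le_div (by linarith) (by linarith) (by linarith)
  · have e0 : splitDist A p q = 1 := splitDist_of_not_iff (by simp [hp, hq])
    have e1 : splitDist A p' q' = 1 := splitDist_of_not_iff (by simp [hp', hq'])
    have e2 : splitDist A p' q = 1 := splitDist_of_not_iff (by simp [hp', hq])
    have e3 : splitDist A p q' = 1 := splitDist_of_not_iff (by simp [hp, hq'])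
    have e4 : splitDist A p p' = 0 := splitDist_of_iff (iff_of_true hp hp')
    have e5 : splitDist A q q' = 0 := splitDist_of_iff (iff_of_false hq hq')
    simp only [betaIdx, e0, e1, e2, e3, e4, e5, mul_zero, mul_one, sub_zero]
    exact max3_le_div (by linarith) (by linarith) (by linarith)
  · have e0 : splitDist A p q = 0 := splitDist_of_iff (iff_of_true hp hq)
    have e1 : splitDist A p' q' = 1 := splitDist_of_not_iff (by simp [hp', hq'])
    have e2 : splitDist A p' q = 1 := splitDist_of_not_iff (by simp [hp', hq])
    have e3 : splitDist A p q' = 0 := splitDist_of_iff (iff_of_true hp hq')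
    have e4 : splitDist A p p' = 1 := splitDist_of_not_iff (by simp [hp, hp'])
    have e5 : splitDist A q q' = 0 := splitDist_of_iff (iff_of_true hq hq')
    simp only [betaIdx, e0, e1, e2, e3, e4, e5, mul_zero, mul_one, sub_zero]
    exact max3_le_div (by linarith) (by linarith) (by linarith)
  · have e0 : splitDist A p q = 0 := splitDist_of_iff (iff_of_true hp hq)
    have e1 : splitDist A p' q' = 0 := splitDist_of_iff (iff_of_false hp' hq')
    have e2 : splitDist A p' q = 1 := splitDist_of_not_iff (by simp [hp', hq])
    have e3 : splitDist A p q' = 1 := splitDist_of_not_iff (by simp [hp, hq'])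
    have e4 : splitDist A p p' = 1 := splitDist_of_not_iff (by simp [hp, hp'])
    have e5 : splitDist A q q' = 1 := splitDist_of_not_iff (by simp [hq, hq'])
    have hb := cross_bound1 d hsym ht0 htα hp hq hp' hq'
    simp only [betaIdx, e0, e1, e2, e3, e4, e5, mul_zero, mul_one, sub_zero]
    exact max3_le_div (by linarith) (by linarith) (by linarith)
  · have e0 : splitDist A p q = 1 := splitDist_of_not_iff (by simp [hp, hq])
    have e1 : splitDist A p' q' = 1 := splitDist_of_not_iff (by simp [hp', hq'])
    have e2 : splitDist A p' q = 0 := splitDist_of_iff (iff_of_false hp' hq)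
    have e3 : splitDist A p q' = 0 := splitDist_of_iff (iff_of_true hp hq')
    have e4 : splitDist A p p' = 1 := splitDist_of_not_iff (by simp [hp, hp'])
    have e5 : splitDist A q q' = 1 := splitDist_of_not_iff (by simp [hq, hq'])
    have hb := cross_bound2 d hsym ht0 htα hp hq' hp' hq
    simp only [betaIdx, e0, e1, e2, e3, e4, e5, mul_zero, mul_one, sub_zero]
    exact max3_le_div (by linarith) (by linarith) (by linarith)
  · have e0 : splitDist A p q = 1 := splitDist_of_not_iff (by simp [hp, hq])
    have e1 : splitDist A p' q' = 0 := splitDist_of_iff (iff_of_false hp' hq')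
    have e2 : splitDist A p' q = 0 := splitDist_of_iff (iff_of_false hp' hq)
    have e3 : splitDist A p q' = 1 := splitDist_of_not_iff (by simp [hp, hq'])
    have e4 : splitDist A p p' = 1 := splitDist_of_not_iff (by simp [hp, hp'])
    have e5 : splitDist A q q' = 0 := splitDist_of_iff (iff_of_false hq hq')
    simp only [betaIdx, e0, e1, e2, e3, e4, e5, mul_zero, mul_one, sub_zero]
    exact max3_le_div (by linarith) (by linarith) (by linarith)
  · have e0 : splitDist A p q = 1 := splitDist_of_not_iff (by simp [hp, hq])
    have e1 : splitDist A p' q' = 0 := splitDist_of_iff (iff_of_true hp' hq')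
    have e2 : splitDist A p' q = 0 := splitDist_of_iff (iff_of_true hp' hq)
    have e3 : splitDist A p q' = 1 := splitDist_of_not_iff (by simp [hp, hq'])
    have e4 : splitDist A p p' = 1 := splitDist_of_not_iff (by simp [hp, hp'])
    have e5 : splitDist A q q' = 0 := splitDist_of_iff (iff_of_true hq hq')
    simp only [betaIdx, e0, e1, e2, e3, e4, e5, mul_zero, mul_one, sub_zero]
    exact max3_le_div (by linarith) (by linarith) (by linarith)
  · have e0 : splitDist A p q = 1 := splitDist_of_not_iff (by simp [hp, hq])
    have e1 : splitDist A p' q' = 1 := splitDist_of_not_iff (by simp [hp', hq'])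
    have e2 : splitDist A p' q = 0 := splitDist_of_iff (iff_of_true hp' hq)
    have e3 : splitDist A p q' = 0 := splitDist_of_iff (iff_of_false hp hq')
    have e4 : splitDist A p p' = 1 := splitDist_of_not_iff (by simp [hp, hp'])
    have e5 : splitDist A q q' = 1 := splitDist_of_not_iff (by simp [hq, hq'])
    have hb := cross_bound2 d hsym ht0 htαc (Set.mem_compl hp) (Set.mem_compl hq') (Set.notMem_compl_iff.mpr hp') (Set.notMem_compl_iff.mpr hq)
    simp only [betaIdx, e0, e1, e2, e3, e4, e5, mul_zero, mul_one, sub_zero]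
    exact max3_le_div (by linarith) (by linarith) (by linarith)
  · have e0 : splitDist A p q = 0 := splitDist_of_iff (iff_of_false hp hq)
    have e1 : splitDist A p' q' = 0 := splitDist_of_iff (iff_of_true hp' hq')
    have e2 : splitDist A p' q = 1 := splitDist_of_not_iff (by simp [hp', hq])
    have e3 : splitDist A p q' = 1 := splitDist_of_not_iff (by simp [hp, hq'])
    have e4 : splitDist A p p' = 1 := splitDist_of_not_iff (by simp [hp, hp'])
    have e5 : splitDist A q q' = 1 := splitDist_of_not_iff (by simp [hq, hq'])
    have hb := cross_bound1 d hsym ht0 htαc (Set.mem_compl hp) (Set.mem_compl hq) (Set.notMem_compl_iff.mpr hp') (Set.notMem_compl_iff.mpr hq')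
    simp only [betaIdx, e0, e1, e2, e3, e4, e5, mul_zero, mul_one, sub_zero]
    exact max3_le_div (by linarith) (by linarith) (by linarith)
  · have e0 : splitDist A p q = 0 := splitDist_of_iff (iff_of_false hp hq)
    have e1 : splitDist A p' q' = 1 := splitDist_of_not_iff (by simp [hp', hq'])
    have e2 : splitDist A p' q = 1 := splitDist_of_not_iff (by simp [hp', hq])
    have e3 : splitDist A p q' = 0 := splitDist_of_iff (iff_of_false hp hq')
    have e4 : splitDist A p p' = 1 := splitDist_of_not_iff (by simp [hp, hp'])
    have e5 : splitDist A q q' = 0 := splitDist_of_iff (iff_of_false hq hq')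
    simp only [betaIdx, e0, e1, e2, e3, e4, e5, mul_zero, mul_one, sub_zero]
    exact max3_le_div (by linarith) (by linarith) (by linarith)
  · have e0 : splitDist A p q = 1 := splitDist_of_not_iff (by simp [hp, hq])
    have e1 : splitDist A p' q' = 1 := splitDist_of_not_iff (by simp [hp', hq'])
    have e2 : splitDist A p' q = 1 := splitDist_of_not_iff (by simp [hp', hq])
    have e3 : splitDist A p q' = 1 := splitDist_of_not_iff (by simp [hp, hq'])
    have e4 : splitDist A p p' = 0 := splitDist_of_iff (iff_of_false hp hp')
    have e5 : splitDist A q q' = 0 := splitDist_of_iff (iff_of_true hq hq')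
    simp only [betaIdx, e0, e1, e2, e3, e4, e5, mul_zero, mul_one, sub_zero]
    exact max3_le_div (by linarith) (by linarith) (by linarith)
  · have e0 : splitDist A p q = 1 := splitDist_of_not_iff (by simp [hp, hq])
    have e1 : splitDist A p' q' = 0 := splitDist_of_iff (iff_of_false hp' hq')
    have e2 : splitDist A p' q = 1 := splitDist_of_not_iff (by simp [hp', hq])
    have e3 : splitDist A p q' = 0 := splitDist_of_iff (iff_of_false hp hq')
    have e4 : splitDist A p p' = 0 := splitDist_of_iff (iff_of_false hp hp')
    have e5 : splitDist A q q' = 1 := splitDist_of_not_iff (by simp [hq, hq'])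
    simp only [betaIdx, e0, e1, e2, e3, e4, e5, mul_zero, mul_one, sub_zero]
    exact max3_le_div (by linarith) (by linarith) (by linarith)
  · have e0 : splitDist A p q = 0 := splitDist_of_iff (iff_of_false hp hq)
    have e1 : splitDist A p' q' = 1 := splitDist_of_not_iff (by simp [hp', hq'])
    have e2 : splitDist A p' q = 0 := splitDist_of_iff (iff_of_false hp' hq)
    have e3 : splitDist A p q' = 1 := splitDist_of_not_iff (by simp [hp, hq'])
    have e4 : splitDist A p p' = 0 := splitDist_of_iff (iff_of_false hp hp')
    have e5 : splitDist A q q' = 1 := splitDist_of_not_iff (by simp [hq, hq'])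
    simp only [betaIdx, e0, e1, e2, e3, e4, e5, mul_zero, mul_one, sub_zero]
    exact max3_le_div (by linarith) (by linarith) (by linarith)
  · have e0 : splitDist A p q = 0 := splitDist_of_iff (iff_of_false hp hq)
    have e1 : splitDist A p' q' = 0 := splitDist_of_iff (iff_of_false hp' hq')
    have e2 : splitDist A p' q = 0 := splitDist_of_iff (iff_of_false hp' hq)
    have e3 : splitDist A p q' = 0 := splitDist_of_iff (iff_of_false hp hq')
    have e4 : splitDist A p p' = 0 := splitDist_of_iff (iff_of_false hp hp')
    have e5 : splitDist A q q' = 0 := splitDist_of_iff (iff_of_false hq hq')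
    simp only [betaIdx, e0, e1, e2, e3, e4, e5, mul_zero, mul_one, sub_zero]
    exact max3_le_div (by linarith) (by linarith) (by linarith)

lemma trim_parallel_le (d : X → X → ℝ) {A : Set X} {t : ℝ} (ht0 : 0 ≤ t)
    {p p' q q' : X} (hp : p ∈ A) (hp' : p' ∈ A) (hq : q ∉ A) (hq' : q' ∉ A) :
    betaIdx (fun u v => d u v - t * splitDist A u v) p p' q q'
      ≤ max (betaIdx d p p' q q' - t) 0 := by
  have e0 : splitDist A p q = 1 := splitDist_of_not_iff (by simp [hp, hq])
  have e1 : splitDist A p' q' = 1 := splitDist_of_not_iff (by simp [hp', hq'])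
  have e2 : splitDist A p' q = 1 := splitDist_of_not_iff (by simp [hp', hq])
  have e3 : splitDist A p q' = 1 := splitDist_of_not_iff (by simp [hp, hq'])
  have e4 : splitDist A p p' = 0 := splitDist_of_iff (iff_of_true hp hp')
  have e5 : splitDist A q q' = 0 := splitDist_of_iff (iff_of_false hq hq')
  simp only [betaIdx, e0, e1, e2, e3, e4, e5, mul_zero, mul_one, sub_zero]
  have F1 : d p q + d p' q' ≤ max (max (d p q + d p' q') (d p' q + d p q')) (d p p' + d q q') :=
    (le_max_left _ _).trans (le_max_left _ _)
  have F2 : d p' q + d p q' ≤ max (max (d p q + d p' q') (d p' q + d p q')) (d p p' + d q q') :=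
    (le_max_right _ _).trans (le_max_left _ _)
  rcases le_total (max (d p q - t + (d p' q' - t)) (d p' q - t + (d p q' - t))) (d p p' + d q q')
    with h | h
  · rw [max_eq_right h]
    have hz : (d p p' + d q q' - d p p' - d q q')/2 = 0 := by ring
    rw [hz]
    exact le_max_right _ _
  · rw [max_eq_left h]
    refine le_trans ?_ (le_max_left _ _)
    have hin : max (d p q - t + (d p' q' - t)) (d p' q - t + (d p q' - t))
        ≤ max (max (d p q + d p' q') (d p' q + d p q')) (d p p' + d q q') - 2*t :=
      max_le (by linarith) (by linarith)
    linarith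

lemma trim_pseudo (d : X → X → ℝ) (hd : IsPseudometric d) {A : Set X} {t : ℝ}
    (ht0 : 0 ≤ t) (htα : t ≤ isolIdx d A Aᶜ) :
    IsPseudometric (fun u v => d u v - t * splitDist A u v) := by
  have hsym := hd.2.1
  have htαc : t ≤ isolIdx d Aᶜ Aᶜᶜ := by rw [isol_compl d hsym]; exact htα
  refine ⟨fun x => by simp [splitDist_self, hd.1 x], fun x y => by
    simp only [splitDist_symm A x y, hd.2.1 x y], fun x y z => ?_⟩
  simp only
  by_cases hx : x ∈ A <;> by_cases hy : y ∈ A <;> by_cases hz : z ∈ A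
  · have e0 : splitDist A x z = 0 := splitDist_of_iff (iff_of_true hx hz)
    have e1 : splitDist A x y = 0 := splitDist_of_iff (iff_of_true hx hy)
    have e2 : splitDist A y z = 0 := splitDist_of_iff (iff_of_true hy hz)
    rw [e0, e1, e2]; linarith [hd.2.2 x y z]
  · have e0 : splitDist A x z = 1 := splitDist_of_not_iff (by simp [hx, hz])
    have e1 : splitDist A x y = 0 := splitDist_of_iff (iff_of_true hx hy)
    have e2 : splitDist A y z = 1 := splitDist_of_not_iff (by simp [hy, hz])
    rw [e0, e1, e2]; linarith [hd.2.2 x y z]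
  · have e0 : splitDist A x z = 0 := splitDist_of_iff (iff_of_true hx hz)
    have e1 : splitDist A x y = 1 := splitDist_of_not_iff (by simp [hx, hy])
    have e2 : splitDist A y z = 1 := splitDist_of_not_iff (by simp [hy, hz])
    rw [e0, e1, e2]
    have := tri_bound d hd htα hx hz hy
    linarith
  · have e0 : splitDist A x z = 1 := splitDist_of_not_iff (by simp [hx, hz])
    have e1 : splitDist A x y = 1 := splitDist_of_not_iff (by simp [hx, hy])
    have e2 : splitDist A y z = 0 := splitDist_of_iff (iff_of_false hy hz)
    rw [e0, e1, e2]; linarith [hd.2.2 x y z]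
  · have e0 : splitDist A x z = 1 := splitDist_of_not_iff (by simp [hx, hz])
    have e1 : splitDist A x y = 1 := splitDist_of_not_iff (by simp [hx, hy])
    have e2 : splitDist A y z = 0 := splitDist_of_iff (iff_of_true hy hz)
    rw [e0, e1, e2]; linarith [hd.2.2 x y z]
  · have e0 : splitDist A x z = 0 := splitDist_of_iff (iff_of_false hx hz)
    have e1 : splitDist A x y = 1 := splitDist_of_not_iff (by simp [hx, hy])
    have e2 : splitDist A y z = 1 := splitDist_of_not_iff (by simp [hy, hz])
    rw [e0, e1, e2]
    have := tri_bound d hd htαc (Set.mem_compl hx) (Set.mem_compl hz) (Set.notMem_compl_iff.mpr hy)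
    linarith
  · have e0 : splitDist A x z = 1 := splitDist_of_not_iff (by simp [hx, hz])
    have e1 : splitDist A x y = 0 := splitDist_of_iff (iff_of_false hx hy)
    have e2 : splitDist A y z = 1 := splitDist_of_not_iff (by simp [hy, hz])
    rw [e0, e1, e2]; linarith [hd.2.2 x y z]
  · have e0 : splitDist A x z = 0 := splitDist_of_iff (iff_of_false hx hz)
    have e1 : splitDist A x y = 0 := splitDist_of_iff (iff_of_false hx hy)
    have e2 : splitDist A y z = 0 := splitDist_of_iff (iff_of_false hy hz)
    rw [e0, e1, e2]; linarith [hd.2.2 x y z]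

lemma trim_isol_eq (d : X → X → ℝ) (hsym : ∀ x y, d x y = d y x) {A : Set X} {t : ℝ}
    (ht0 : 0 ≤ t) (htα : t ≤ isolIdx d A Aᶜ)
    {C : Set X} (hC : IsSplit C Cᶜ) (hCA : C ≠ A) (hCA' : C ≠ Aᶜ) :
    isolIdx (fun u v => d u v - t * splitDist A u v) C Cᶜ = isolIdx d C Cᶜ := by
  obtain ⟨⟨⟨c0, hc0⟩, ⟨e0, he0⟩, _⟩, _⟩ := hC
  apply le_antisymm
  · refine le_csInf ⟨_, c0, hc0, c0, hc0, e0, he0, e0, he0, rfl⟩ ?_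
    rintro r ⟨c, hc, c', hc', e, he, e', he', rfl⟩
    exact le_trans (isol_le_beta _ hc hc' he he') (trim_beta_le d hsym ht0 htα c c' e e')
  · refine le_csInf ⟨_, c0, hc0, c0, hc0, e0, he0, e0, he0, rfl⟩ ?_
    rintro r ⟨c, hc, c', hc', e, he, e', he', rfl⟩
    have HC : isolIdx d C Cᶜ ≤ betaIdx d c c' e e' := isol_le_beta d hc hc' he he'
    have HCu : isolIdx d C Cᶜ * 2 + (d c c' + d e e')
        ≤ max (max (d c e + d c' e') (d c' e + d c e')) (d c c' + d e e') := by
      unfold betaIdx at HC; linarith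
    by_cases hcA : c ∈ A <;> by_cases hc'A : c' ∈ A <;> by_cases heA : e ∈ A <;>
      by_cases he'A : e' ∈ A
    · have s0 : splitDist A c e = 0 := splitDist_of_iff (iff_of_true hcA heA)
      have s1 : splitDist A c' e' = 0 := splitDist_of_iff (iff_of_true hc'A he'A)
      have s2 : splitDist A c' e = 0 := splitDist_of_iff (iff_of_true hc'A heA)
      have s3 : splitDist A c e' = 0 := splitDist_of_iff (iff_of_true hcA he'A)
      have s4 : splitDist A c c' = 0 := splitDist_of_iff (iff_of_true hcA hc'A)
      have s5 : splitDist A e e' = 0 := splitDist_of_iff (iff_of_true heA he'A)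
      simp only [betaIdx, s0, s1, s2, s3, s4, s5, mul_zero, mul_one, sub_zero]
      apply le_beta_shape
      rcases le_max_iff.1 HCu with h | h
      · rcases le_max_iff.1 h with h | h <;>
          first
            | exact le_trans (by linarith) ((le_max_left _ _).trans (le_max_left _ _))
            | exact le_trans (by linarith) ((le_max_right _ _).trans (le_max_left _ _))
            | exact le_trans (by linarith) (le_max_right _ _)
      · first
          | exact le_trans (by linarith) ((le_max_left _ _).trans (le_max_left _ _))
          | exact le_trans (by linarith) ((le_max_right _ _).trans (le_max_left _ _))
          | exact le_trans (by linarith) (le_max_right _ _)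
    · have s0 : splitDist A c e = 0 := splitDist_of_iff (iff_of_true hcA heA)
      have s1 : splitDist A c' e' = 1 := splitDist_of_not_iff (by simp [hc'A, he'A])
      have s2 : splitDist A c' e = 0 := splitDist_of_iff (iff_of_true hc'A heA)
      have s3 : splitDist A c e' = 1 := splitDist_of_not_iff (by simp [hcA, he'A])
      have s4 : splitDist A c c' = 0 := splitDist_of_iff (iff_of_true hcA hc'A)
      have s5 : splitDist A e e' = 1 := splitDist_of_not_iff (by simp [heA, he'A])
      simp only [betaIdx, s0, s1, s2, s3, s4, s5, mul_zero, mul_one, sub_zero]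
      apply le_beta_shape
      rcases le_max_iff.1 HCu with h | h
      · rcases le_max_iff.1 h with h | h <;>
          first
            | exact le_trans (by linarith) ((le_max_left _ _).trans (le_max_left _ _))
            | exact le_trans (by linarith) ((le_max_right _ _).trans (le_max_left _ _))
            | exact le_trans (by linarith) (le_max_right _ _)
      · first
          | exact le_trans (by linarith) ((le_max_left _ _).trans (le_max_left _ _))
          | exact le_trans (by linarith) ((le_max_right _ _).trans (le_max_left _ _))
          | exact le_trans (by linarith) (le_max_right _ _)
    · have s0 : splitDist A c e = 1 := splitDist_of_not_iff (by simp [hcA, heA])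
      have s1 : splitDist A c' e' = 0 := splitDist_of_iff (iff_of_true hc'A he'A)
      have s2 : splitDist A c' e = 1 := splitDist_of_not_iff (by simp [hc'A, heA])
      have s3 : splitDist A c e' = 0 := splitDist_of_iff (iff_of_true hcA he'A)
      have s4 : splitDist A c c' = 0 := splitDist_of_iff (iff_of_true hcA hc'A)
      have s5 : splitDist A e e' = 1 := splitDist_of_not_iff (by simp [heA, he'A])
      simp only [betaIdx, s0, s1, s2, s3, s4, s5, mul_zero, mul_one, sub_zero]
      apply le_beta_shape
      rcases le_max_iff.1 HCu with h | h
      · rcases le_max_iff.1 h with h | h <;>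
          first
            | exact le_trans (by linarith) ((le_max_left _ _).trans (le_max_left _ _))
            | exact le_trans (by linarith) ((le_max_right _ _).trans (le_max_left _ _))
            | exact le_trans (by linarith) (le_max_right _ _)
      · first
          | exact le_trans (by linarith) ((le_max_left _ _).trans (le_max_left _ _))
          | exact le_trans (by linarith) ((le_max_right _ _).trans (le_max_left _ _))
          | exact le_trans (by linarith) (le_max_right _ _)
    · by_cases hαS : isolIdx d A Aᶜ ≤ 0
      · have ht' : t = 0 := le_antisymm (htα.trans hαS) ht0
        have hfun : (fun u v => d u v - t * splitDist A u v) = d := by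
          funext u v; rw [ht']; ring
        rw [hfun]
        exact HC
      · by_cases hαC : isolIdx d C Cᶜ ≤ 0
        · exact le_trans hαC (beta_nonneg _ c c' e e')
        · push_neg at hαS hαC
          have hz : ∃ z, (z ∈ C ∧ z ∉ A) ∨ (z ∉ C ∧ z ∈ A) := by
            by_contra hcon
            push_neg at hcon
            exact hCA (Set.ext fun w =>
              ⟨fun hw => (hcon w).1 hw,
               fun hw => Classical.byContradiction fun hwC => (hcon w).2 hwC hw⟩)
          obtain ⟨z, hz⟩ := hz
          have FP : d c c' + d e e' + (2*isolIdx d A Aᶜ + 2*isolIdx d C Cᶜ)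
              ≤ max (d c e + d c' e') (d c' e + d c e') := by
            rcases hz with ⟨hzC, hzA⟩ | ⟨hzC, hzA⟩
            · exact five_pt d hsym c c' e e' z _ _ hαS hαC
                (isol_le_beta d hcA hc'A (Set.mem_compl heA) (Set.mem_compl hzA))
                (isol_le_beta d hcA hc'A (Set.mem_compl he'A) (Set.mem_compl hzA))
                (isol_le_beta d hc hzC he he')
                (isol_le_beta d hc' hzC he he')
            · have h3 : isolIdx d A Aᶜ ≤ betaIdx d c z e e' :=
                isol_le_beta d hcA hzA (Set.mem_compl heA) (Set.mem_compl he'A)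
              have h4 : isolIdx d A Aᶜ ≤ betaIdx d c' z e e' :=
                isol_le_beta d hc'A hzA (Set.mem_compl heA) (Set.mem_compl he'A)
              linarith [five_pt d hsym c c' e e' z _ _ hαC hαS
                (isol_le_beta d hc hc' he (Set.mem_compl hzC))
                (isol_le_beta d hc hc' he' (Set.mem_compl hzC))
                h3 h4]
          have s0 : splitDist A c e = 1 := splitDist_of_not_iff (by simp [hcA, heA])
          have s1 : splitDist A c' e' = 1 := splitDist_of_not_iff (by simp [hc'A, he'A])
          have s2 : splitDist A c' e = 1 := splitDist_of_not_iff (by simp [hc'A, heA])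
          have s3 : splitDist A c e' = 1 := splitDist_of_not_iff (by simp [hcA, he'A])
          have s4 : splitDist A c c' = 0 := splitDist_of_iff (iff_of_true hcA hc'A)
          have s5 : splitDist A e e' = 0 := splitDist_of_iff (iff_of_false heA he'A)
          simp only [betaIdx, s0, s1, s2, s3, s4, s5, mul_zero, mul_one, sub_zero]
          apply le_beta_shape
          rcases le_total (d c e + d c' e') (d c' e + d c e') with hm | hm
          · rw [max_eq_right hm] at FP
            exact le_trans (by linarith) ((le_max_right _ _).trans (le_max_left _ _))
          · rw [max_eq_left hm] at FP
            exact le_trans (by linarith) ((le_max_left _ _).trans (le_max_left _ _))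
    · have s0 : splitDist A c e = 0 := splitDist_of_iff (iff_of_true hcA heA)
      have s1 : splitDist A c' e' = 1 := splitDist_of_not_iff (by simp [hc'A, he'A])
      have s2 : splitDist A c' e = 1 := splitDist_of_not_iff (by simp [hc'A, heA])
      have s3 : splitDist A c e' = 0 := splitDist_of_iff (iff_of_true hcA he'A)
      have s4 : splitDist A c c' = 1 := splitDist_of_not_iff (by simp [hcA, hc'A])
      have s5 : splitDist A e e' = 0 := splitDist_of_iff (iff_of_true heA he'A)
      simp only [betaIdx, s0, s1, s2, s3, s4, s5, mul_zero, mul_one, sub_zero]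
      apply le_beta_shape
      rcases le_max_iff.1 HCu with h | h
      · rcases le_max_iff.1 h with h | h <;>
          first
            | exact le_trans (by linarith) ((le_max_left _ _).trans (le_max_left _ _))
            | exact le_trans (by linarith) ((le_max_right _ _).trans (le_max_left _ _))
            | exact le_trans (by linarith) (le_max_right _ _)
      · first
          | exact le_trans (by linarith) ((le_max_left _ _).trans (le_max_left _ _))
          | exact le_trans (by linarith) ((le_max_right _ _).trans (le_max_left _ _))
          | exact le_trans (by linarith) (le_max_right _ _)
    · have s0 : splitDist A c e = 0 := splitDist_of_iff (iff_of_true hcA heA)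
      have s1 : splitDist A c' e' = 0 := splitDist_of_iff (iff_of_false hc'A he'A)
      have s2 : splitDist A c' e = 1 := splitDist_of_not_iff (by simp [hc'A, heA])
      have s3 : splitDist A c e' = 1 := splitDist_of_not_iff (by simp [hcA, he'A])
      have s4 : splitDist A c c' = 1 := splitDist_of_not_iff (by simp [hcA, hc'A])
      have s5 : splitDist A e e' = 1 := splitDist_of_not_iff (by simp [heA, he'A])
      simp only [betaIdx, s0, s1, s2, s3, s4, s5, mul_zero, mul_one, sub_zero]
      apply le_beta_shape
      rcases le_max_iff.1 HCu with h | h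
      · rcases le_max_iff.1 h with h | h <;>
          first
            | exact le_trans (by linarith) ((le_max_left _ _).trans (le_max_left _ _))
            | exact le_trans (by linarith) ((le_max_right _ _).trans (le_max_left _ _))
            | exact le_trans (by linarith) (le_max_right _ _)
      · first
          | exact le_trans (by linarith) ((le_max_left _ _).trans (le_max_left _ _))
          | exact le_trans (by linarith) ((le_max_right _ _).trans (le_max_left _ _))
          | exact le_trans (by linarith) (le_max_right _ _)
    · have s0 : splitDist A c e = 1 := splitDist_of_not_iff (by simp [hcA, heA])
      have s1 : splitDist A c' e' = 1 := splitDist_of_not_iff (by simp [hc'A, he'A])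
      have s2 : splitDist A c' e = 0 := splitDist_of_iff (iff_of_false hc'A heA)
      have s3 : splitDist A c e' = 0 := splitDist_of_iff (iff_of_true hcA he'A)
      have s4 : splitDist A c c' = 1 := splitDist_of_not_iff (by simp [hcA, hc'A])
      have s5 : splitDist A e e' = 1 := splitDist_of_not_iff (by simp [heA, he'A])
      simp only [betaIdx, s0, s1, s2, s3, s4, s5, mul_zero, mul_one, sub_zero]
      apply le_beta_shape
      rcases le_max_iff.1 HCu with h | h
      · rcases le_max_iff.1 h with h | h <;>
          first
            | exact le_trans (by linarith) ((le_max_left _ _).trans (le_max_left _ _))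
            | exact le_trans (by linarith) ((le_max_right _ _).trans (le_max_left _ _))
            | exact le_trans (by linarith) (le_max_right _ _)
      · first
          | exact le_trans (by linarith) ((le_max_left _ _).trans (le_max_left _ _))
          | exact le_trans (by linarith) ((le_max_right _ _).trans (le_max_left _ _))
          | exact le_trans (by linarith) (le_max_right _ _)
    · have s0 : splitDist A c e = 1 := splitDist_of_not_iff (by simp [hcA, heA])
      have s1 : splitDist A c' e' = 0 := splitDist_of_iff (iff_of_false hc'A he'A)
      have s2 : splitDist A c' e = 0 := splitDist_of_iff (iff_of_false hc'A heA)
      have s3 : splitDist A c e' = 1 := splitDist_of_not_iff (by simp [hcA, he'A])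
      have s4 : splitDist A c c' = 1 := splitDist_of_not_iff (by simp [hcA, hc'A])
      have s5 : splitDist A e e' = 0 := splitDist_of_iff (iff_of_false heA he'A)
      simp only [betaIdx, s0, s1, s2, s3, s4, s5, mul_zero, mul_one, sub_zero]
      apply le_beta_shape
      rcases le_max_iff.1 HCu with h | h
      · rcases le_max_iff.1 h with h | h <;>
          first
            | exact le_trans (by linarith) ((le_max_left _ _).trans (le_max_left _ _))
            | exact le_trans (by linarith) ((le_max_right _ _).trans (le_max_left _ _))
            | exact le_trans (by linarith) (le_max_right _ _)
      · first
          | exact le_trans (by linarith) ((le_max_left _ _).trans (le_max_left _ _))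
          | exact le_trans (by linarith) ((le_max_right _ _).trans (le_max_left _ _))
          | exact le_trans (by linarith) (le_max_right _ _)
    · have s0 : splitDist A c e = 1 := splitDist_of_not_iff (by simp [hcA, heA])
      have s1 : splitDist A c' e' = 0 := splitDist_of_iff (iff_of_true hc'A he'A)
      have s2 : splitDist A c' e = 0 := splitDist_of_iff (iff_of_true hc'A heA)
      have s3 : splitDist A c e' = 1 := splitDist_of_not_iff (by simp [hcA, he'A])
      have s4 : splitDist A c c' = 1 := splitDist_of_not_iff (by simp [hcA, hc'A])
      have s5 : splitDist A e e' = 0 := splitDist_of_iff (iff_of_true heA he'A)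
      simp only [betaIdx, s0, s1, s2, s3, s4, s5, mul_zero, mul_one, sub_zero]
      apply le_beta_shape
      rcases le_max_iff.1 HCu with h | h
      · rcases le_max_iff.1 h with h | h <;>
          first
            | exact le_trans (by linarith) ((le_max_left _ _).trans (le_max_left _ _))
            | exact le_trans (by linarith) ((le_max_right _ _).trans (le_max_left _ _))
            | exact le_trans (by linarith) (le_max_right _ _)
      · first
          | exact le_trans (by linarith) ((le_max_left _ _).trans (le_max_left _ _))
          | exact le_trans (by linarith) ((le_max_right _ _).trans (le_max_left _ _))
          | exact le_trans (by linarith) (le_max_right _ _)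
    · have s0 : splitDist A c e = 1 := splitDist_of_not_iff (by simp [hcA, heA])
      have s1 : splitDist A c' e' = 1 := splitDist_of_not_iff (by simp [hc'A, he'A])
      have s2 : splitDist A c' e = 0 := splitDist_of_iff (iff_of_true hc'A heA)
      have s3 : splitDist A c e' = 0 := splitDist_of_iff (iff_of_false hcA he'A)
      have s4 : splitDist A c c' = 1 := splitDist_of_not_iff (by simp [hcA, hc'A])
      have s5 : splitDist A e e' = 1 := splitDist_of_not_iff (by simp [heA, he'A])
      simp only [betaIdx, s0, s1, s2, s3, s4, s5, mul_zero, mul_one, sub_zero]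
      apply le_beta_shape
      rcases le_max_iff.1 HCu with h | h
      · rcases le_max_iff.1 h with h | h <;>
          first
            | exact le_trans (by linarith) ((le_max_left _ _).trans (le_max_left _ _))
            | exact le_trans (by linarith) ((le_max_right _ _).trans (le_max_left _ _))
            | exact le_trans (by linarith) (le_max_right _ _)
      · first
          | exact le_trans (by linarith) ((le_max_left _ _).trans (le_max_left _ _))
          | exact le_trans (by linarith) ((le_max_right _ _).trans (le_max_left _ _))
          | exact le_trans (by linarith) (le_max_right _ _)
    · have s0 : splitDist A c e = 0 := splitDist_of_iff (iff_of_false hcA heA)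
      have s1 : splitDist A c' e' = 0 := splitDist_of_iff (iff_of_true hc'A he'A)
      have s2 : splitDist A c' e = 1 := splitDist_of_not_iff (by simp [hc'A, heA])
      have s3 : splitDist A c e' = 1 := splitDist_of_not_iff (by simp [hcA, he'A])
      have s4 : splitDist A c c' = 1 := splitDist_of_not_iff (by simp [hcA, hc'A])
      have s5 : splitDist A e e' = 1 := splitDist_of_not_iff (by simp [heA, he'A])
      simp only [betaIdx, s0, s1, s2, s3, s4, s5, mul_zero, mul_one, sub_zero]
      apply le_beta_shape
      rcases le_max_iff.1 HCu with h | h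
      · rcases le_max_iff.1 h with h | h <;>
          first
            | exact le_trans (by linarith) ((le_max_left _ _).trans (le_max_left _ _))
            | exact le_trans (by linarith) ((le_max_right _ _).trans (le_max_left _ _))
            | exact le_trans (by linarith) (le_max_right _ _)
      · first
          | exact le_trans (by linarith) ((le_max_left _ _).trans (le_max_left _ _))
          | exact le_trans (by linarith) ((le_max_right _ _).trans (le_max_left _ _))
          | exact le_trans (by linarith) (le_max_right _ _)
    · have s0 : splitDist A c e = 0 := splitDist_of_iff (iff_of_false hcA heA)
      have s1 : splitDist A c' e' = 1 := splitDist_of_not_iff (by simp [hc'A, he'A])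
      have s2 : splitDist A c' e = 1 := splitDist_of_not_iff (by simp [hc'A, heA])
      have s3 : splitDist A c e' = 0 := splitDist_of_iff (iff_of_false hcA he'A)
      have s4 : splitDist A c c' = 1 := splitDist_of_not_iff (by simp [hcA, hc'A])
      have s5 : splitDist A e e' = 0 := splitDist_of_iff (iff_of_false heA he'A)
      simp only [betaIdx, s0, s1, s2, s3, s4, s5, mul_zero, mul_one, sub_zero]
      apply le_beta_shape
      rcases le_max_iff.1 HCu with h | h
      · rcases le_max_iff.1 h with h | h <;>
          first
            | exact le_trans (by linarith) ((le_max_left _ _).trans (le_max_left _ _))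
            | exact le_trans (by linarith) ((le_max_right _ _).trans (le_max_left _ _))
            | exact le_trans (by linarith) (le_max_right _ _)
      · first
          | exact le_trans (by linarith) ((le_max_left _ _).trans (le_max_left _ _))
          | exact le_trans (by linarith) ((le_max_right _ _).trans (le_max_left _ _))
          | exact le_trans (by linarith) (le_max_right _ _)
    · by_cases hαS : isolIdx d A Aᶜ ≤ 0
      · have ht' : t = 0 := le_antisymm (htα.trans hαS) ht0
        have hfun : (fun u v => d u v - t * splitDist A u v) = d := by
          funext u v; rw [ht']; ring
        rw [hfun]
        exact HC
      · by_cases hαC : isolIdx d C Cᶜ ≤ 0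
        · exact le_trans hαC (beta_nonneg _ c c' e e')
        · push_neg at hαS hαC
          have hz : ∃ z, (z ∈ C ∧ z ∈ A) ∨ (z ∉ C ∧ z ∉ A) := by
            by_contra hcon
            push_neg at hcon
            exact hCA' (Set.ext fun w =>
              ⟨fun hw => (hcon w).1 hw,
               fun hw => Classical.byContradiction fun hwC => hw ((hcon w).2 hwC)⟩)
          obtain ⟨z, hz⟩ := hz
          have FP : d c c' + d e e' + (2*isolIdx d A Aᶜ + 2*isolIdx d C Cᶜ)
              ≤ max (d c e + d c' e') (d c' e + d c e') := by
            rcases hz with ⟨hzC, hzA⟩ | ⟨hzC, hzA⟩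
            · have h1 : isolIdx d A Aᶜ ≤ betaIdx d c c' e z := by
                rw [← isol_compl d hsym A]
                exact isol_le_beta d (Set.mem_compl hcA) (Set.mem_compl hc'A) (Set.mem_compl (Set.notMem_compl_iff.mpr heA)) (Set.mem_compl (Set.notMem_compl_iff.mpr hzA))
              have h2 : isolIdx d A Aᶜ ≤ betaIdx d c c' e' z := by
                rw [← isol_compl d hsym A]
                exact isol_le_beta d (Set.mem_compl hcA) (Set.mem_compl hc'A) (Set.mem_compl (Set.notMem_compl_iff.mpr he'A)) (Set.mem_compl (Set.notMem_compl_iff.mpr hzA))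
              exact five_pt d hsym c c' e e' z _ _ hαS hαC h1 h2
                (isol_le_beta d hc hzC he he')
                (isol_le_beta d hc' hzC he he')
            · have h3 : isolIdx d A Aᶜ ≤ betaIdx d c z e e' := by
                rw [← isol_compl d hsym A]
                exact isol_le_beta d (Set.mem_compl hcA) (Set.mem_compl hzA) (Set.mem_compl (Set.notMem_compl_iff.mpr heA)) (Set.mem_compl (Set.notMem_compl_iff.mpr he'A))
              have h4 : isolIdx d A Aᶜ ≤ betaIdx d c' z e e' := by
                rw [← isol_compl d hsym A]
                exact isol_le_beta d (Set.mem_compl hc'A) (Set.mem_compl hzA) (Set.mem_compl (Set.notMem_compl_iff.mpr heA)) (Set.mem_compl (Set.notMem_compl_iff.mpr he'A))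
              linarith [five_pt d hsym c c' e e' z _ _ hαC hαS
                (isol_le_beta d hc hc' he (Set.mem_compl hzC))
                (isol_le_beta d hc hc' he' (Set.mem_compl hzC))
                h3 h4]
          have s0 : splitDist A c e = 1 := splitDist_of_not_iff (by simp [hcA, heA])
          have s1 : splitDist A c' e' = 1 := splitDist_of_not_iff (by simp [hc'A, he'A])
          have s2 : splitDist A c' e = 1 := splitDist_of_not_iff (by simp [hc'A, heA])
          have s3 : splitDist A c e' = 1 := splitDist_of_not_iff (by simp [hcA, he'A])
          have s4 : splitDist A c c' = 0 := splitDist_of_iff (iff_of_false hcA hc'A)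
          have s5 : splitDist A e e' = 0 := splitDist_of_iff (iff_of_true heA he'A)
          simp only [betaIdx, s0, s1, s2, s3, s4, s5, mul_zero, mul_one, sub_zero]
          apply le_beta_shape
          rcases le_total (d c e + d c' e') (d c' e + d c e') with hm | hm
          · rw [max_eq_right hm] at FP
            exact le_trans (by linarith) ((le_max_right _ _).trans (le_max_left _ _))
          · rw [max_eq_left hm] at FP
            exact le_trans (by linarith) ((le_max_left _ _).trans (le_max_left _ _))
    · have s0 : splitDist A c e = 1 := splitDist_of_not_iff (by simp [hcA, heA])
      have s1 : splitDist A c' e' = 0 := splitDist_of_iff (iff_of_false hc'A he'A)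
      have s2 : splitDist A c' e = 1 := splitDist_of_not_iff (by simp [hc'A, heA])
      have s3 : splitDist A c e' = 0 := splitDist_of_iff (iff_of_false hcA he'A)
      have s4 : splitDist A c c' = 0 := splitDist_of_iff (iff_of_false hcA hc'A)
      have s5 : splitDist A e e' = 1 := splitDist_of_not_iff (by simp [heA, he'A])
      simp only [betaIdx, s0, s1, s2, s3, s4, s5, mul_zero, mul_one, sub_zero]
      apply le_beta_shape
      rcases le_max_iff.1 HCu with h | h
      · rcases le_max_iff.1 h with h | h <;>
          first
            | exact le_trans (by linarith) ((le_max_left _ _).trans (le_max_left _ _))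
            | exact le_trans (by linarith) ((le_max_right _ _).trans (le_max_left _ _))
            | exact le_trans (by linarith) (le_max_right _ _)
      · first
          | exact le_trans (by linarith) ((le_max_left _ _).trans (le_max_left _ _))
          | exact le_trans (by linarith) ((le_max_right _ _).trans (le_max_left _ _))
          | exact le_trans (by linarith) (le_max_right _ _)
    · have s0 : splitDist A c e = 0 := splitDist_of_iff (iff_of_false hcA heA)
      have s1 : splitDist A c' e' = 1 := splitDist_of_not_iff (by simp [hc'A, he'A])
      have s2 : splitDist A c' e = 0 := splitDist_of_iff (iff_of_false hc'A heA)
      have s3 : splitDist A c e' = 1 := splitDist_of_not_iff (by simp [hcA, he'A])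
      have s4 : splitDist A c c' = 0 := splitDist_of_iff (iff_of_false hcA hc'A)
      have s5 : splitDist A e e' = 1 := splitDist_of_not_iff (by simp [heA, he'A])
      simp only [betaIdx, s0, s1, s2, s3, s4, s5, mul_zero, mul_one, sub_zero]
      apply le_beta_shape
      rcases le_max_iff.1 HCu with h | h
      · rcases le_max_iff.1 h with h | h <;>
          first
            | exact le_trans (by linarith) ((le_max_left _ _).trans (le_max_left _ _))
            | exact le_trans (by linarith) ((le_max_right _ _).trans (le_max_left _ _))
            | exact le_trans (by linarith) (le_max_right _ _)
      · first
          | exact le_trans (by linarith) ((le_max_left _ _).trans (le_max_left _ _))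
          | exact le_trans (by linarith) ((le_max_right _ _).trans (le_max_left _ _))
          | exact le_trans (by linarith) (le_max_right _ _)
    · have s0 : splitDist A c e = 0 := splitDist_of_iff (iff_of_false hcA heA)
      have s1 : splitDist A c' e' = 0 := splitDist_of_iff (iff_of_false hc'A he'A)
      have s2 : splitDist A c' e = 0 := splitDist_of_iff (iff_of_false hc'A heA)
      have s3 : splitDist A c e' = 0 := splitDist_of_iff (iff_of_false hcA he'A)
      have s4 : splitDist A c c' = 0 := splitDist_of_iff (iff_of_false hcA hc'A)
      have s5 : splitDist A e e' = 0 := splitDist_of_iff (iff_of_false heA he'A)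
      simp only [betaIdx, s0, s1, s2, s3, s4, s5, mul_zero, mul_one, sub_zero]
      apply le_beta_shape
      rcases le_max_iff.1 HCu with h | h
      · rcases le_max_iff.1 h with h | h <;>
          first
            | exact le_trans (by linarith) ((le_max_left _ _).trans (le_max_left _ _))
            | exact le_trans (by linarith) ((le_max_right _ _).trans (le_max_left _ _))
            | exact le_trans (by linarith) (le_max_right _ _)
      · first
          | exact le_trans (by linarith) ((le_max_left _ _).trans (le_max_left _ _))
          | exact le_trans (by linarith) ((le_max_right _ _).trans (le_max_left _ _))
          | exact le_trans (by linarith) (le_max_right _ _)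

/-! ### Complement lemmas for splits -/

lemma isSplit_compl {A : Set X} (h : IsSplit A Aᶜ) : IsSplit Aᶜ Aᶜᶜ := by
  refine ⟨⟨h.1.2.1, ?_, disjoint_compl_right⟩, union_compl_self _⟩
  rw [compl_compl]; exact h.1.1

lemma isDSplit_compl (d : X → X → ℝ) (hsym : ∀ x y, d x y = d y x) {A : Set X}
    (h : IsDSplit d A Aᶜ) : IsDSplit d Aᶜ Aᶜᶜ :=
  ⟨isSplit_compl h.1, by rw [isol_compl d hsym]; exact h.2⟩

/-! ### Iterated trimming over a finite set of splits -/

lemma trim_finset (G : Finset (Set X)) :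
    ∀ (d : X → X → ℝ), IsPseudometric d →
    (∀ A ∈ G, IsSplit A Aᶜ) → (∀ A ∈ G, ∀ B ∈ G, A ≠ Bᶜ) →
    IsPseudometric (fun u v => d u v - ∑ B ∈ G, isolIdx d B Bᶜ * splitDist B u v) ∧
    (∀ p p' q q', betaIdx (fun u v => d u v - ∑ B ∈ G, isolIdx d B Bᶜ * splitDist B u v) p p' q q'
        ≤ betaIdx d p p' q q') ∧
    (∀ A ∈ G, ∀ p p' q q', p ∈ A → p' ∈ A → q ∉ A → q' ∉ A →
      betaIdx (fun u v => d u v - ∑ B ∈ G, isolIdx d B Bᶜ * splitDist B u v) p p' q q'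
        ≤ max (betaIdx d p p' q q' - isolIdx d A Aᶜ) 0) := by
  classical
  induction G using Finset.induction with
  | empty =>
    intro d hd _ _
    have hfun : (fun u v => d u v - ∑ B ∈ (∅ : Finset (Set X)), isolIdx d B Bᶜ * splitDist B u v)
        = d := by
      funext u v; simp
    rw [hfun]
    exact ⟨hd, fun p p' q q' => le_refl _, fun A hA => absurd hA (Finset.notMem_empty A)⟩
  | @insert A s hA ih =>
    intro d hd hsp hnc
    have hsplitA : IsSplit A Aᶜ := hsp A (Finset.mem_insert_self A s)
    have ht0 : 0 ≤ isolIdx d A Aᶜ := isol_nonneg d hsplitA.1.1 hsplitA.1.2.1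
    have hd1 : IsPseudometric (fun u v => d u v - isolIdx d A Aᶜ * splitDist A u v) :=
      trim_pseudo d hd ht0 le_rfl
    have heq : ∀ B ∈ s,
        isolIdx (fun u v => d u v - isolIdx d A Aᶜ * splitDist A u v) B Bᶜ = isolIdx d B Bᶜ := by
      intro B hB
      refine trim_isol_eq d hd.2.1 ht0 le_rfl (hsp B (Finset.mem_insert_of_mem hB)) ?_ ?_
      · exact fun h => hA (h ▸ hB)
      · intro h
        exact (hnc A (Finset.mem_insert_self A s) B (Finset.mem_insert_of_mem hB))
          (by rw [h, compl_compl])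
    have IH := ih (fun u v => d u v - isolIdx d A Aᶜ * splitDist A u v) hd1
      (fun B hB => hsp B (Finset.mem_insert_of_mem hB))
      (fun B hB B' hB' => hnc B (Finset.mem_insert_of_mem hB) B' (Finset.mem_insert_of_mem hB'))
    have hfun : (fun u v => d u v - ∑ B ∈ insert A s, isolIdx d B Bᶜ * splitDist B u v)
        = (fun u v => (d u v - isolIdx d A Aᶜ * splitDist A u v)
            - ∑ B ∈ s, isolIdx (fun u' v' => d u' v' - isolIdx d A Aᶜ * splitDist A u' v') B Bᶜ
                * splitDist B u v) := by
      funext u v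
      rw [Finset.sum_insert hA]
      have hss : ∑ B ∈ s, isolIdx (fun u' v' => d u' v' - isolIdx d A Aᶜ * splitDist A u' v') B Bᶜ
          * splitDist B u v = ∑ B ∈ s, isolIdx d B Bᶜ * splitDist B u v :=
        Finset.sum_congr rfl (fun B hB => by rw [heq B hB])
      rw [hss]; ring
    rw [hfun]
    refine ⟨IH.1, ?_, ?_⟩
    · intro p p' q q'
      exact le_trans (IH.2.1 p p' q q') (trim_beta_le d hd.2.1 ht0 le_rfl p p' q q')
    · intro A' hA' p p' q q' hp hp' hq hq'
      rcases Finset.mem_insert.1 hA' with rfl | hA's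
      · exact le_trans (IH.2.1 p p' q q') (trim_parallel_le d ht0 hp hp' hq hq')
      · have h1 := IH.2.2 A' hA's p p' q q' hp hp' hq hq'
        rw [heq A' hA's] at h1
        refine le_trans h1 ?_
        exact max_le_max (sub_le_sub_right (trim_beta_le d hd.2.1 ht0 le_rfl p p' q q') _) le_rfl

/-! ### Half-integrality and finiteness -/

lemma isol_ge_half (d : X → X → ℝ) (hint : IsIntegerValued d) {A : Set X}
    (h : IsDSplit d A Aᶜ) : 1/2 ≤ isolIdx d A Aᶜ := by
  by_contra hlt
  push_neg at hlt
  obtain ⟨a0, ha0⟩ := h.1.1.1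
  obtain ⟨b0, hb0⟩ := h.1.1.2.1
  have hne : {r : ℝ | ∃ a ∈ A, ∃ a' ∈ A, ∃ b ∈ Aᶜ, ∃ b' ∈ Aᶜ, r = betaIdx d a a' b b'}.Nonempty :=
    ⟨_, a0, ha0, a0, ha0, b0, hb0, b0, hb0, rfl⟩
  obtain ⟨r, hr, hrlt⟩ := exists_lt_of_csInf_lt hne hlt
  obtain ⟨a, ha, a', ha', b, hb, b', hb', rfl⟩ := hr
  obtain ⟨n1, e1⟩ := hint a b
  obtain ⟨n2, e2⟩ := hint a' b'
  obtain ⟨n3, e3⟩ := hint a' b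
  obtain ⟨n4, e4⟩ := hint a b'
  obtain ⟨n5, e5⟩ := hint a a'
  obtain ⟨n6, e6⟩ := hint b b'
  have hform : betaIdx d a a' b b' = ((max (max (n1+n2) (n3+n4)) (n5+n6) - n5 - n6 : ℤ) : ℝ)/2 := by
    unfold betaIdx
    rw [e1, e2, e3, e4, e5, e6]
    norm_cast
  set K : ℤ := max (max (n1+n2) (n3+n4)) (n5+n6) - n5 - n6 with hK
  have h0 : (0:ℝ) ≤ (K:ℝ)/2 := hform ▸ beta_nonneg d a a' b b'
  have h1 : (K:ℝ)/2 < 1/2 := hform ▸ hrlt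
  have hK1 : K < 1 := by exact_mod_cast (by linarith : (K:ℝ) < 1)
  have hK0 : 0 ≤ K := by exact_mod_cast (by linarith : (0:ℝ) ≤ (K:ℝ))
  have hKz : K = 0 := by omega
  have hβ0 : betaIdx d a a' b b' = 0 := by rw [hform, hKz]; norm_num
  have := isol_le_beta d ha ha' hb hb'
  have := h.2
  linarith

lemma dsplits_sep_finite (d : X → X → ℝ) (hd : IsPseudometric d) (hint : IsIntegerValued d)
    (x y : X) : {A : Set X | IsDSplit d A Aᶜ ∧ x ∈ A ∧ y ∉ A}.Finite := by
  classical
  by_contra hinf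
  have hinf' : {A : Set X | IsDSplit d A Aᶜ ∧ x ∈ A ∧ y ∉ A}.Infinite := hinf
  obtain ⟨s, hsub, hcard⟩ := hinf'.exists_subset_card_eq (⌈2 * d x y⌉₊ + 1)
  have hsubm : ∀ A ∈ s, IsDSplit d A Aᶜ ∧ x ∈ A ∧ y ∉ A := fun A hA => hsub hA
  have hsp : ∀ A ∈ s, IsSplit A Aᶜ := fun A hA => (hsubm A hA).1.1
  have hnc : ∀ A ∈ s, ∀ B ∈ s, A ≠ Bᶜ := by
    intro A hA B hB h
    have hxA : x ∈ A := (hsubm A hA).2.1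
    have hxB : x ∈ B := (hsubm B hB).2.1
    rw [h] at hxA
    exact hxA hxB
  have hps := (trim_finset s d hd hsp hnc).1
  have h0 : 0 ≤ d x y - ∑ B ∈ s, isolIdx d B Bᶜ * splitDist B x y := pseudometric_nonneg hps x y
  have hsum : ∑ B ∈ s, isolIdx d B Bᶜ * splitDist B x y = ∑ B ∈ s, isolIdx d B Bᶜ :=
    Finset.sum_congr rfl (fun B hB => by
      rw [splitDist_of_not_iff (by simp [(hsubm B hB).2.1, (hsubm B hB).2.2]), mul_one])
  have hlow : (s.card : ℝ) * (1/2) ≤ ∑ B ∈ s, isolIdx d B Bᶜ := by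
    have := Finset.card_nsmul_le_sum s (fun B => isolIdx d B Bᶜ) (1/2)
      (fun B hB => isol_ge_half d hint (hsubm B hB).1)
    rwa [nsmul_eq_mul] at this
  have hceil : 2 * d x y ≤ (⌈2 * d x y⌉₊ : ℝ) := Nat.le_ceil _
  have hcardR : (s.card : ℝ) = (⌈2 * d x y⌉₊ : ℝ) + 1 := by
    rw [hcard]; push_cast; ring
  linarith

/-! ### Sum identification -/

lemma sumeq (d : X → X → ℝ) (hsym : ∀ x y, d x y = d y x)
    (hFin : ∀ u v : X, ({A : Set X | IsDSplit d A Aᶜ ∧ u ∈ A ∧ v ∉ A}).Finite)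
    (G : Finset (Set X)) (w : X)
    (hG : ∀ A ∈ G, IsDSplit d A Aᶜ ∧ w ∈ A)
    (u v : X)
    (hcov : ∀ A : Set X, IsDSplit d A Aᶜ → w ∈ A → ¬(u ∈ A ↔ v ∈ A) → A ∈ G) :
    ∑ B ∈ G, isolIdx d B Bᶜ * splitDist B u v
      = ∑ᶠ A ∈ {A : Set X | IsDSplit d A Aᶜ ∧ u ∈ A ∧ v ∉ A}, isolIdx d A Aᶜ := by
  classical
  rw [finsum_mem_eq_finite_toFinset_sum (fun A => isolIdx d A Aᶜ) (hFin u v)]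
  have hfilter : ∑ B ∈ G, isolIdx d B Bᶜ * splitDist B u v
      = ∑ B ∈ G.filter (fun B => ¬(u ∈ B ↔ v ∈ B)), isolIdx d B Bᶜ := by
    rw [Finset.sum_filter]
    refine Finset.sum_congr rfl (fun B _ => ?_)
    by_cases h : u ∈ B ↔ v ∈ B
    · rw [splitDist_of_iff h, mul_zero, if_neg (by simpa using h)]
    · rw [splitDist_of_not_iff h, mul_one, if_pos h]
  rw [hfilter]
  refine Finset.sum_nbij' (i := fun B => if u ∈ B then B else Bᶜ)
    (j := fun A => if w ∈ A then A else Aᶜ) ?_ ?_ ?_ ?_ ?_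
  · intro B hB
    obtain ⟨hBG, hsep⟩ := Finset.mem_filter.1 hB
    obtain ⟨hds, _⟩ := hG B hBG
    simp only [Set.Finite.mem_toFinset, Set.mem_setOf_eq]
    by_cases hu : u ∈ B
    · have hv : v ∉ B := fun hv => hsep ⟨fun _ => hv, fun _ => hu⟩
      simp only [if_pos hu]
      exact ⟨hds, hu, hv⟩
    · have hv : v ∈ B := by
        by_contra hv
        exact hsep ⟨fun h => absurd h hu, fun h => absurd h hv⟩
      simp only [if_neg hu]
      exact ⟨isDSplit_compl d hsym hds, hu, by simpa using hv⟩
  · intro A hA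
    rw [Set.Finite.mem_toFinset] at hA
    obtain ⟨hds, hu, hv⟩ := hA
    by_cases hw : w ∈ A
    · simp only [if_pos hw]
      exact Finset.mem_filter.2 ⟨hcov A hds hw (fun h => hv (h.1 hu)),
        fun h => hv (h.1 hu)⟩
    · simp only [if_neg hw]
      exact Finset.mem_filter.2
        ⟨hcov Aᶜ (isDSplit_compl d hsym hds) (Set.mem_compl hw)
          (fun h => (h.mpr (Set.mem_compl hv)) hu),
         fun h => (h.mpr (Set.mem_compl hv)) hu⟩
  · intro B hB
    obtain ⟨hBG, _⟩ := Finset.mem_filter.1 hB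
    have hw := (hG B hBG).2
    by_cases hu : u ∈ B
    · simp [hu, hw]
    · simp [hu, hw]
  · intro A hA
    rw [Set.Finite.mem_toFinset] at hA
    obtain ⟨_, hu, _⟩ := hA
    by_cases hw : w ∈ A
    · simp [hw, hu]
    · simp [hw, hu]
  · intro B hB
    by_cases hu : u ∈ B
    · simp only [if_pos hu]
    · simp only [if_neg hu]
      first
        | exact (isol_compl d hsym B).symm
        | exact isol_symm d hsym B Bᶜ

/-! ### Main theorem -/

theorem statement6 (d : X → X → ℝ) (hd : IsPseudometric d) (hint : IsIntegerValued d) :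
    ∃ d₀ : X → X → ℝ, IsPseudometric d₀ ∧
      (∀ A B : Set X, IsSplit A B → isolIdx d₀ A B = 0) ∧
      ∀ x y : X, {A : Set X | IsDSplit d A Aᶜ ∧ x ∈ A ∧ y ∉ A}.Finite ∧
        d x y = d₀ x y
          + ∑ᶠ A ∈ {A : Set X | IsDSplit d A Aᶜ ∧ x ∈ A ∧ y ∉ A}, isolIdx d A Aᶜ := by
  classical
  have hsym := hd.2.1
  have hFin : ∀ u v : X, ({A : Set X | IsDSplit d A Aᶜ ∧ u ∈ A ∧ v ∉ A}).Finite :=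
    fun u v => dsplits_sep_finite d hd hint u v
  set S : X → X → ℝ :=
    fun u v => ∑ᶠ A ∈ {A : Set X | IsDSplit d A Aᶜ ∧ u ∈ A ∧ v ∉ A}, isolIdx d A Aᶜ with hS
  -- generic facts about normalized families
  have hGfacts : ∀ (G : Finset (Set X)) (w : X), (∀ A ∈ G, IsDSplit d A Aᶜ ∧ w ∈ A) →
      (∀ A ∈ G, IsSplit A Aᶜ) ∧ (∀ A ∈ G, ∀ B ∈ G, A ≠ Bᶜ) := by
    intro G w hG
    refine ⟨fun A hA => (hG A hA).1.1, fun A hA B hB h => ?_⟩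
    have hwA := (hG A hA).2
    have hwB := (hG B hB).2
    rw [h] at hwA
    exact hwA hwB
  refine ⟨fun u v => d u v - S u v, ⟨?_, ?_, ?_⟩, ?_, ?_⟩
  · -- reflexivity
    intro x
    have hempty : {A : Set X | IsDSplit d A Aᶜ ∧ x ∈ A ∧ x ∉ A} = ∅ :=
      Set.eq_empty_iff_forall_notMem.mpr (fun A hA => hA.2.2 hA.2.1)
    simp only [hS, hempty, finsum_mem_empty, hd.1 x, sub_zero]
  · -- symmetry
    intro x y
    set G : Finset (Set X) := (hFin x y).toFinset with hG
    have hGm : ∀ A ∈ G, IsDSplit d A Aᶜ ∧ x ∈ A := by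
      intro A hA
      rw [hG, Set.Finite.mem_toFinset] at hA
      exact ⟨hA.1, hA.2.1⟩
    have e1 : ∑ B ∈ G, isolIdx d B Bᶜ * splitDist B x y = S x y := by
      refine sumeq d hsym hFin G x hGm x y ?_
      intro A hds hw hsep
      rw [hG, Set.Finite.mem_toFinset]
      exact ⟨hds, hw, fun hy => hsep ⟨fun _ => hy, fun _ => hw⟩⟩
    have e2 : ∑ B ∈ G, isolIdx d B Bᶜ * splitDist B y x = S y x := by
      refine sumeq d hsym hFin G x hGm y x ?_
      intro A hds hw hsep
      rw [hG, Set.Finite.mem_toFinset]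
      refine ⟨hds, hw, fun hy => hsep ⟨fun _ => hw, fun _ => hy⟩⟩
    have e3 : ∑ B ∈ G, isolIdx d B Bᶜ * splitDist B x y
        = ∑ B ∈ G, isolIdx d B Bᶜ * splitDist B y x :=
      Finset.sum_congr rfl (fun B _ => by rw [splitDist_symm])
    simp only
    rw [hd.2.1 x y, ← e1, ← e2, e3]
  · -- triangle
    intro x y z
    set G : Finset (Set X) := (hFin x y).toFinset ∪ (hFin x z).toFinset with hG
    have hGm : ∀ A ∈ G, IsDSplit d A Aᶜ ∧ x ∈ A := by
      intro A hA
      rw [hG, Finset.mem_union, Set.Finite.mem_toFinset, Set.Finite.mem_toFinset] at hA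
      rcases hA with hA | hA <;> exact ⟨hA.1, hA.2.1⟩
    obtain ⟨hsp, hnc⟩ := hGfacts G x hGm
    have TF := trim_finset G d hd hsp hnc
    have exy : ∑ B ∈ G, isolIdx d B Bᶜ * splitDist B x y = S x y := by
      refine sumeq d hsym hFin G x hGm x y ?_
      intro A hds hw hsep
      rw [hG, Finset.mem_union, Set.Finite.mem_toFinset]
      exact Or.inl ⟨hds, hw, fun hy => hsep ⟨fun _ => hy, fun _ => hw⟩⟩
    have exz : ∑ B ∈ G, isolIdx d B Bᶜ * splitDist B x z = S x z := by
      refine sumeq d hsym hFin G x hGm x z ?_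
      intro A hds hw hsep
      rw [hG, Finset.mem_union, Set.Finite.mem_toFinset, Set.Finite.mem_toFinset]
      exact Or.inr ⟨hds, hw, fun hz => hsep ⟨fun _ => hz, fun _ => hw⟩⟩
    have eyz : ∑ B ∈ G, isolIdx d B Bᶜ * splitDist B y z = S y z := by
      refine sumeq d hsym hFin G x hGm y z ?_
      intro A hds hw hsep
      rw [hG, Finset.mem_union, Set.Finite.mem_toFinset, Set.Finite.mem_toFinset]
      by_cases hy : y ∈ A
      · have hz : z ∉ A := fun hz => hsep ⟨fun _ => hz, fun _ => hy⟩
        exact Or.inr ⟨hds, hw, hz⟩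
      · exact Or.inl ⟨hds, hw, hy⟩
    have htri := TF.1.2.2 x y z
    simp only at htri ⊢
    rw [← exy, ← exz, ← eyz]
    exact htri
  · -- split prime
    intro C B hCB
    have hBc : B = Cᶜ := split_compl_eq hCB
    subst hBc
    have hC : IsSplit C Cᶜ := hCB
    have h0 : 0 ≤ isolIdx (fun u v => d u v - S u v) C Cᶜ :=
      isol_nonneg _ hC.1.1 hC.1.2.1
    have hub : ∀ ε : ℝ, 0 < ε → isolIdx (fun u v => d u v - S u v) C Cᶜ ≤ ε := by
      intro ε hε
      obtain ⟨c1, hc1⟩ := hC.1.1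
      obtain ⟨e1, he1⟩ := hC.1.2.1
      have hne : {r : ℝ | ∃ a ∈ C, ∃ a' ∈ C, ∃ b ∈ Cᶜ, ∃ b' ∈ Cᶜ, r = betaIdx d a a' b b'}.Nonempty :=
        ⟨_, c1, hc1, c1, hc1, e1, he1, e1, he1, rfl⟩
      have hlt : isolIdx d C Cᶜ < isolIdx d C Cᶜ + ε := lt_add_of_pos_right _ hε
      obtain ⟨r, hr, hrlt⟩ := exists_lt_of_csInf_lt hne hlt
      obtain ⟨c, hc, c', hc', e, he, e', he', rfl⟩ := hr
      set G : Finset (Set X) :=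
        ((hFin c c').toFinset ∪ (hFin c e).toFinset) ∪ (hFin c e').toFinset with hG
      have hGm : ∀ A ∈ G, IsDSplit d A Aᶜ ∧ c ∈ A := by
        intro A hA
        rw [hG, Finset.mem_union, Finset.mem_union, Set.Finite.mem_toFinset,
          Set.Finite.mem_toFinset, Set.Finite.mem_toFinset] at hA
        rcases hA with (hA | hA) | hA <;> exact ⟨hA.1, hA.2.1⟩
      obtain ⟨hsp, hnc⟩ := hGfacts G c hGm
      have TF := trim_finset G d hd hsp hnc
      -- agreement of the two metrics on the six pairs
      have hagree : ∀ u v : X, (u = c ∨ u = c' ∨ u = e ∨ u = e') →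
          (v = c ∨ v = c' ∨ v = e ∨ v = e') →
          d u v - S u v = d u v - ∑ B ∈ G, isolIdx d B Bᶜ * splitDist B u v := by
        intro u v hu hv
        have := sumeq d hsym hFin G c hGm u v ?_
        · rw [this]
        intro A hds hw hsep
        rw [hG, Finset.mem_union, Finset.mem_union, Set.Finite.mem_toFinset,
          Set.Finite.mem_toFinset, Set.Finite.mem_toFinset]
        -- A separates u,v and contains c; so A separates c from one of c', e, e'
        have hsep' : c' ∉ A ∨ e ∉ A ∨ e' ∉ A := by
          by_contra hcon
          push_neg at hcon
          obtain ⟨h1', h2', h3'⟩ := hcon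
          have hmem : ∀ w' : X, (w' = c ∨ w' = c' ∨ w' = e ∨ w' = e') → w' ∈ A := by
            intro w' hw'
            rcases hw' with rfl | rfl | rfl | rfl
            · exact hw
            · exact h1'
            · exact h2'
            · exact h3'
          exact hsep ⟨fun _ => hmem v hv, fun _ => hmem u hu⟩
        rcases hsep' with h | h | h
        · exact Or.inl (Or.inl ⟨hds, hw, h⟩)
        · exact Or.inl (Or.inr ⟨hds, hw, h⟩)
        · exact Or.inr ⟨hds, hw, h⟩
      have hβeq : betaIdx (fun u v => d u v - S u v) c c' e e'
          = betaIdx (fun u v => d u v - ∑ B ∈ G, isolIdx d B Bᶜ * splitDist B u v) c c' e e' := by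
        simp only [betaIdx]
        rw [hagree c e (Or.inl rfl) (Or.inr (Or.inr (Or.inl rfl))),
          hagree c' e' (Or.inr (Or.inl rfl)) (Or.inr (Or.inr (Or.inr rfl))),
          hagree c' e (Or.inr (Or.inl rfl)) (Or.inr (Or.inr (Or.inl rfl))),
          hagree c e' (Or.inl rfl) (Or.inr (Or.inr (Or.inr rfl))),
          hagree c c' (Or.inl rfl) (Or.inr (Or.inl rfl)),
          hagree e e' (Or.inr (Or.inr (Or.inl rfl))) (Or.inr (Or.inr (Or.inr rfl)))]
      have hstart : isolIdx (fun u v => d u v - S u v) C Cᶜ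
          ≤ betaIdx (fun u v => d u v - ∑ B ∈ G, isolIdx d B Bᶜ * splitDist B u v) c c' e e' := by
        rw [← hβeq]
        exact isol_le_beta _ hc hc' he he'
      by_cases hds : IsDSplit d C Cᶜ
      · have hCG : C ∈ G := by
          rw [hG, Finset.mem_union, Finset.mem_union, Set.Finite.mem_toFinset,
            Set.Finite.mem_toFinset]
          exact Or.inl (Or.inr ⟨hds, hc, he⟩)
        have hkey := TF.2.2 C hCG c c' e e' hc hc' he he'
        refine le_trans hstart (le_trans hkey ?_)
        exact max_le (by linarith) (le_of_lt hε)
      · have hα0 : isolIdx d C Cᶜ = 0 := by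
          have hge := isol_nonneg d hC.1.1 hC.1.2.1
          by_contra hne0
          exact hds ⟨hC, lt_of_le_of_ne hge (Ne.symm hne0)⟩
        have hkey := TF.2.1 c c' e e'
        refine le_trans hstart (le_trans hkey ?_)
        rw [hα0] at hrlt
        linarith
    refine le_antisymm ?_ h0
    by_contra hpos
    push_neg at hpos
    have := hub (isolIdx (fun u v => d u v - S u v) C Cᶜ / 2) (by linarith)
    linarith
  · -- finiteness and the decomposition formula
    intro x y
    exact ⟨hFin x y, by ring⟩
end
end

section
/- Let S₀ be a weakly compatible collection of splits of a set X and, for each S ∈ S₀, let λ_S ∈ (0,∞). Assume that for every x,y ∈ X the (possibly infinite) sum d(x,y) := ∑_{S ∈ S₀} λ_S δ_S(x,y) converges to a nonnegative integer. Then d is a pseudometric, S₀ is exactly the set of all d-splits of X, and for each S ∈ S₀ the isolation index α^d_S equals λ_S. -/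
open Set Function

noncomputable section

variable {X : Type*}

/-!
Put `w := 𝒮.indicator lam`. As `𝒮` contains both sides of each of its splits, `d x y` is the
`w`-weight of the sets containing `x` but not `y`. For four points let `sepWeight w a a' b b'` be the
weight of the sets containing `a, a'` and missing `b, b'`. Summing split pseudometrics gives
`d a b + d a' b' - d a a' - d b b' = 2 (sepWeight w a a' b b' - sepWeight w a b a' b')`, and weak
compatibility forces one of the three ways of cutting `{a, a', b, b'}` into two pairs to carry no
weight; together these give `β^d(a, a', b, b') = sepWeight w a a' b b'`.

Integrality makes every `β^d` a half-integer, so the infimum `α^d_{A, Aᶜ}` is attained at some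
`a, a' ∈ A`, `b, b' ∉ A`. If a weighted set `C ≠ A` also separated `a, a'` from `b, b'`, a point of
`C \ A` could replace `b` or `b'` (symmetrically, a point of `A \ C` could replace `a` or `a'`), and
weak compatibility makes one of these replacements lose `C` without gaining any other set,
contradicting minimality. Hence `α^d_{A, Aᶜ} = w A` for every bipartition, which gives all three
claims.
-/

def WeaklyCompatible (𝒮 : Set (Set X)) : Prop :=
  ¬ ∃ (x₀ : X) (x : Fin 3 → X) (T : Fin 3 → Set X),
    (∀ i, T i ∈ 𝒮) ∧ ∀ i j, ((x₀ ∈ T i ↔ x j ∈ T i) ↔ i = j)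

def splitsBetween (a a' b b' : X) : Set (Set X) := {A | a ∈ A ∧ a' ∈ A ∧ b ∉ A ∧ b' ∉ A}

theorem splitsBetween_comm_right (a a' b b' : X) :
    splitsBetween a a' b b' = splitsBetween a a' b' b := by
  ext A
  simp only [splitsBetween, mem_ofPred_eq]
  tauto

theorem compl_mem_splitsBetween {A : Set X} {a a' b b' : X} :
    Aᶜ ∈ splitsBetween a a' b b' ↔ A ∈ splitsBetween b b' a a' := by
  simp only [splitsBetween, mem_ofPred_eq, mem_compl_iff, not_not]
  tauto

theorem WeaklyCompatible.disjoint_splitsBetween {𝒮 : Set (Set X)} (h𝒮 : WeaklyCompatible 𝒮)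
    (x₀ x₁ x₂ x₃ : X) :
    Disjoint 𝒮 (splitsBetween x₀ x₁ x₂ x₃) ∨ Disjoint 𝒮 (splitsBetween x₀ x₂ x₁ x₃) ∨
      Disjoint 𝒮 (splitsBetween x₀ x₃ x₁ x₂) := by
  by_contra! h
  simp only [not_disjoint_iff] at h
  obtain ⟨⟨T₁, hT₁, h₁⟩, ⟨T₂, hT₂, h₂⟩, ⟨T₃, hT₃, h₃⟩⟩ := h
  refine h𝒮 ⟨x₀, ![x₁, x₂, x₃], ![T₁, T₂, T₃], fun i => by fin_cases i <;> assumption, ?_⟩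
  simp only [splitsBetween, mem_ofPred_eq] at h₁ h₂ h₃
  intro i j
  fin_cases i <;> fin_cases j <;> simp [h₁, h₂, h₃]

theorem exists_isLeast_of_two_mul_int {S : Set ℝ} (hS : S.Nonempty) (h₀ : ∀ x ∈ S, 0 ≤ x)
    (hint : ∀ x ∈ S, ∃ n : ℤ, 2 * x = n) : ∃ x, IsLeast S x := by
  have hbdd : ∀ n : ℤ, (∃ x ∈ S, 2 * x = n) → 0 ≤ n := by
    rintro n ⟨x, hx, hxn⟩
    have : (0 : ℝ) ≤ n := hxn ▸ by linarith [h₀ x hx]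
    exact_mod_cast this
  obtain ⟨n, ⟨x, hx, hxn⟩, hn⟩ := Int.exists_least_of_bdd ⟨0, hbdd⟩
    (hS.elim fun x hx => (hint x hx).imp fun n hn => ⟨x, hx, hn⟩)
  refine ⟨x, hx, fun y hy => ?_⟩
  obtain ⟨m, hm⟩ := hint y hy
  have : (n : ℝ) ≤ m := by exact_mod_cast hn m ⟨y, hy, hm⟩
  linarith

theorem IsIntegerValued.exists_two_mul_betaIdx {d : X → X → ℝ} (hint : IsIntegerValued d)
    (a a' b b' : X) : ∃ n : ℤ, 2 * betaIdx d a a' b b' = n := by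
  obtain ⟨n₁, h₁⟩ := hint a b
  obtain ⟨n₂, h₂⟩ := hint a' b'
  obtain ⟨n₃, h₃⟩ := hint a' b
  obtain ⟨n₄, h₄⟩ := hint a b'
  obtain ⟨n₅, h₅⟩ := hint a a'
  obtain ⟨n₆, h₆⟩ := hint b b'
  refine ⟨max (max (n₁ + n₂) (n₃ + n₄)) (n₅ + n₆) - n₅ - n₆, ?_⟩
  rw [betaIdx, h₁, h₂, h₃, h₄, h₅, h₆]
  push_cast
  ring

def sepWeight (w : Set X → ℝ) (a a' b b' : X) : ℝ :=
  ∑' A, (splitsBetween a a' b b').indicator w A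

section

variable {w : Set X → ℝ} {d : X → X → ℝ}

theorem indicator_le_indicator_of_support_inter_subset (hw : 0 ≤ w) {P Q : Set (Set X)}
    (hPQ : support w ∩ P ⊆ Q) : P.indicator w ≤ Q.indicator w := by
  rw [← indicator_inter_support, inter_comm]
  exact indicator_le_indicator_of_subset hPQ hw

theorem tsum_indicator_add_le (hw : 0 ≤ w) {P Q : Set (Set X)} (hQ : Summable (Q.indicator w))
    (hPQ : support w ∩ P ⊆ Q) {C : Set X} (hCQ : C ∈ Q) (hCP : C ∉ P) :
    ∑' A, P.indicator w A + w C ≤ ∑' A, Q.indicator w A := by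
  classical
  have hle : ∀ A, P.indicator w A + (if A = C then w C else 0) ≤ Q.indicator w A := by
    intro A
    by_cases hAC : A = C
    · simp [hAC, hCP, hCQ]
    · simpa [hAC] using indicator_le_indicator_of_support_inter_subset hw hPQ A
  have hP : Summable (P.indicator w) :=
    hQ.of_nonneg_of_le (indicator_nonneg fun A _ => hw A)
      (indicator_le_indicator_of_support_inter_subset hw hPQ)
  exact hasSum_le hle (hP.hasSum.add (hasSum_ite_eq C (w C))) hQ.hasSum

theorem tsum_indicator_eq_of_support_inter_subset {P : Set (Set X)} {C : Set X} (hC : C ∈ P)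
    (hPC : support w ∩ P ⊆ {C}) : ∑' A, P.indicator w A = w C := by
  rw [tsum_eq_single C fun A hA => ?_, indicator_of_mem hC]
  exact indicator_apply_eq_zero.mpr fun hAP => notMem_support.mp fun hwA => hA (hPC ⟨hwA, hAP⟩)

theorem sepWeight_nonneg (hw : 0 ≤ w) (a a' b b' : X) : 0 ≤ sepWeight w a a' b b' :=
  tsum_nonneg (indicator_nonneg fun A _ => hw A)

theorem sepWeight_comm_right (a a' b b' : X) : sepWeight w a a' b' b = sepWeight w a a' b b' := by
  rw [sepWeight, splitsBetween_comm_right, sepWeight]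

theorem sepWeight_swap (hw_compl : ∀ A, w Aᶜ = w A) (a a' b b' : X) :
    sepWeight w b b' a a' = sepWeight w a a' b b' := by
  rw [sepWeight, ← (compl_involutive.toPerm _).tsum_eq, sepWeight]
  congr 1
  ext A
  by_cases hA : A ∈ splitsBetween a a' b b'
  · rw [Involutive.coe_toPerm, indicator_of_mem (compl_mem_splitsBetween.mpr hA),
      indicator_of_mem hA, hw_compl]
  · rw [Involutive.coe_toPerm, indicator_of_notMem (mt compl_mem_splitsBetween.mp hA),
      indicator_of_notMem hA]

theorem sepWeight_eq_zero_of_disjoint {a a' b b' : X}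
    (h : Disjoint (support w) (splitsBetween a a' b b')) : sepWeight w a a' b b' = 0 := by
  rw [sepWeight, ← indicator_inter_support, inter_comm, h.inter_eq, indicator_empty, tsum_zero]

section

variable (hd : ∀ x y, HasSum ((splitsBetween x x y y).indicator w) (d x y))
include hd

theorem summable_indicator_splitsBetween (a a' b b' : X) :
    Summable ((splitsBetween a a' b b').indicator w) := by
  have hsub : splitsBetween a a' b b' ⊆ splitsBetween a a b b :=
    fun A h => ⟨h.1, h.1, h.2.2.1, h.2.2.1⟩
  simpa [indicator_indicator, inter_eq_left.mpr hsub] using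
    (hd a b).summable.indicator (splitsBetween a a' b b')

theorem dist_eq_sepWeight (x y : X) : d x y = sepWeight w x x y y :=
  (hd x y).tsum_eq.symm

theorem isPseudometric_of_hasSum (hw : 0 ≤ w) (hw_compl : ∀ A, w Aᶜ = w A) : IsPseudometric d := by
  have hs := summable_indicator_splitsBetween hd
  refine ⟨fun x => ?_, fun x y => ?_, fun x y z => ?_⟩
  · rw [dist_eq_sepWeight hd]
    exact sepWeight_eq_zero_of_disjoint (disjoint_right.mpr fun A h => absurd h.1 h.2.2.1)
  · rw [dist_eq_sepWeight hd, dist_eq_sepWeight hd, sepWeight_swap hw_compl]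
  · have hle : ∀ A, (splitsBetween x x z z).indicator w A ≤
        (splitsBetween x x y y).indicator w A + (splitsBetween y y z z).indicator w A := by
      classical
      intro A
      have : 0 ≤ w A := hw A
      simp only [indicator_apply, splitsBetween, mem_ofPred_eq]
      split_ifs <;> first | linarith | tauto
    rw [dist_eq_sepWeight hd, dist_eq_sepWeight hd, dist_eq_sepWeight hd, sepWeight, sepWeight,
      sepWeight, ← (hs x x y y).tsum_add (hs y y z z)]
    exact (hs x x z z).tsum_le_tsum hle ((hs x x y y).add (hs y y z z))

theorem hasSum_mul_splitDist (hw_compl : ∀ A, w Aᶜ = w A) (x y : X) :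
    HasSum (fun A => w A * splitDist A x y) (2 * d x y) := by
  have h := (hd x y).add (hd y x)
  rw [dist_eq_sepWeight hd y x, sepWeight_swap hw_compl, ← dist_eq_sepWeight hd, ← two_mul] at h
  convert h using 2 with A
  classical
  by_cases hx : x ∈ A <;> by_cases hy : y ∈ A <;>
    simp [splitDist, splitsBetween, hx, hy]

theorem four_point_identity (hw_compl : ∀ A, w Aᶜ = w A) (p q r t : X) :
    d p r + d q t - d p q - d r t = 2 * (sepWeight w p q r t - sepWeight w p r q t) := by
  have hs : ∀ a a' b b', HasSum ((splitsBetween a a' b b').indicator w) (sepWeight w a a' b b') :=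
    fun a a' b b' => (summable_indicator_splitsBetween hd a a' b b').hasSum
  have hδ := hasSum_mul_splitDist hd hw_compl
  -- For a single set only the cuts `pq|rt` and `pr|qt` contribute, with opposite signs.
  have hpt : ∀ A, w A * splitDist A p r + w A * splitDist A q t - w A * splitDist A p q -
      w A * splitDist A r t = 2 * ((splitsBetween p q r t).indicator w A +
        (splitsBetween r t p q).indicator w A - (splitsBetween p r q t).indicator w A -
          (splitsBetween q t p r).indicator w A) := by
    classical
    intro A
    by_cases hp : p ∈ A <;> by_cases hq : q ∈ A <;> by_cases hr : r ∈ A <;> by_cases ht : t ∈ A <;>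
      simp [splitDist, splitsBetween, hp, hq, hr, ht] <;> ring
  have hL := (((hδ p r).add (hδ q t)).sub (hδ p q)).sub (hδ r t)
  simp only [hpt] at hL
  have h := hL.unique
    (((((hs p q r t).add (hs r t p q)).sub (hs p r q t)).sub (hs q t p r)).mul_left 2)
  rw [sepWeight_swap hw_compl p q r t, sepWeight_swap hw_compl p r q t] at h
  linarith

theorem betaIdx_eq_sepWeight (hw_compl : ∀ A, w Aᶜ = w A) (hw : 0 ≤ w)
    (hwc : WeaklyCompatible (support w)) (a a' b b' : X) :
    betaIdx d a a' b b' = sepWeight w a a' b b' := by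
  have h₁ := four_point_identity hd hw_compl a a' b b'
  have h₂ := four_point_identity hd hw_compl a a' b' b
  rw [sepWeight_comm_right, (isPseudometric_of_hasSum hd hw hw_compl).2.1 b' b] at h₂
  have h₀ : sepWeight w a b a' b' = 0 ∨ sepWeight w a a' b b' = 0 ∨ sepWeight w a b' a' b = 0 := by
    rcases hwc.disjoint_splitsBetween a b a' b' with h | h | h
    · exact .inl (sepWeight_eq_zero_of_disjoint h)
    · exact .inr (.inl (sepWeight_eq_zero_of_disjoint h))
    · rw [sepWeight_comm_right a b' b a']
      exact .inr (.inr (sepWeight_eq_zero_of_disjoint h))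
  have := sepWeight_nonneg hw a b a' b'
  have := sepWeight_nonneg hw a a' b b'
  have := sepWeight_nonneg hw a b' a' b
  rw [betaIdx]
  rcases h₀ with h | h | h <;> simp only [max_def] <;> split_ifs <;> linarith

theorem sepWeight_lt_of_disjoint (hw : 0 ≤ w) {C : Set X} {a a' b b' c : X} (hC : C ∈ support w)
    (hCsep : C ∈ splitsBetween a a' b b') (hc : c ∈ C)
    (hdis : Disjoint (support w) (splitsBetween a b c b')) :
    sepWeight w a a' c b' < sepWeight w a a' b b' := by
  have hsub : support w ∩ splitsBetween a a' c b' ⊆ splitsBetween a a' b b' :=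
    fun U ⟨hU, ha, ha', hcU, hb'⟩ =>
      ⟨ha, ha', fun hb => disjoint_left.mp hdis hU ⟨ha, hb, hcU, hb'⟩, hb'⟩
  have := tsum_indicator_add_le hw (summable_indicator_splitsBetween hd a a' b b') hsub hCsep
    fun h => h.2.2.1 hc
  have : 0 < w C := lt_of_le_of_ne (hw C) (Ne.symm hC)
  rw [sepWeight, sepWeight]
  linarith

theorem subset_of_sepWeight_le (hw : 0 ≤ w) (hwc : WeaklyCompatible (support w)) {A C : Set X}
    {a a' b b' : X} (ha : a ∈ A) (ha' : a' ∈ A) (hb : b ∈ Aᶜ) (hb' : b' ∈ Aᶜ)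
    (hmin : ∀ a₁ ∈ A, ∀ a₁' ∈ A, ∀ b₁ ∈ Aᶜ, ∀ b₁' ∈ Aᶜ,
      sepWeight w a a' b b' ≤ sepWeight w a₁ a₁' b₁ b₁')
    (hC : C ∈ support w) (hCsep : C ∈ splitsBetween a a' b b') : C ⊆ A := by
  intro c hc
  by_contra hcA
  -- `C` cuts `ac|bb'`, so one of the cuts `ab|cb'`, `ab'|cb` is weightless, and then `c` can
  -- replace `b`, respectively `b'`, without bringing in new sets.
  rcases hwc.disjoint_splitsBetween a c b b' with h | h | h
  · exact disjoint_left.mp h hC ⟨hCsep.1, hc, hCsep.2.2⟩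
  · exact (hmin a ha a' ha' c hcA b' hb').not_gt (sepWeight_lt_of_disjoint hd hw hC hCsep hc h)
  · rw [splitsBetween_comm_right] at hCsep
    have := sepWeight_lt_of_disjoint hd hw hC hCsep hc h
    rw [sepWeight_comm_right a a' b b'] at this
    exact (hmin a ha a' ha' c hcA b hb).not_gt this

theorem eq_of_sepWeight_le (hw : 0 ≤ w) (hwc : WeaklyCompatible (support w))
    (hw_compl : ∀ A, w Aᶜ = w A) {A C : Set X} {a a' b b' : X}
    (ha : a ∈ A) (ha' : a' ∈ A) (hb : b ∈ Aᶜ) (hb' : b' ∈ Aᶜ)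
    (hmin : ∀ a₁ ∈ A, ∀ a₁' ∈ A, ∀ b₁ ∈ Aᶜ, ∀ b₁' ∈ Aᶜ,
      sepWeight w a a' b b' ≤ sepWeight w a₁ a₁' b₁ b₁')
    (hC : C ∈ support w) (hCsep : C ∈ splitsBetween a a' b b') : C = A := by
  refine (subset_of_sepWeight_le hd hw hwc ha ha' hb hb' hmin hC hCsep).antisymm ?_
  -- `A ⊆ C` is the same statement for `Aᶜ`, `Cᶜ` and the quadruple `b, b', a, a'`.
  have hmin' : ∀ b₁ ∈ Aᶜ, ∀ b₁' ∈ Aᶜ, ∀ a₁ ∈ Aᶜᶜ, ∀ a₁' ∈ Aᶜᶜ,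
      sepWeight w b b' a a' ≤ sepWeight w b₁ b₁' a₁ a₁' := by
    intro b₁ hb₁ b₁' hb₁' a₁ ha₁ a₁' ha₁'
    rw [sepWeight_swap hw_compl a a' b b', sepWeight_swap hw_compl a₁ a₁' b₁ b₁']
    rw [compl_compl] at ha₁ ha₁'
    exact hmin a₁ ha₁ a₁' ha₁' b₁ hb₁ b₁' hb₁'
  have hCc : Cᶜ ∈ support w := by rwa [mem_support, hw_compl]
  rw [← compl_subset_compl]
  exact subset_of_sepWeight_le hd hw hwc hb hb' (by rwa [compl_compl]) (by rwa [compl_compl])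
    hmin' hCc (compl_mem_splitsBetween.mpr hCsep)

theorem isolIdx_compl_eq (hw : 0 ≤ w) (hwc : WeaklyCompatible (support w))
    (hw_compl : ∀ A, w Aᶜ = w A) (hint : IsIntegerValued d) {A : Set X}
    (hA : A.Nonempty) (hAc : Aᶜ.Nonempty) : isolIdx d A Aᶜ = w A := by
  have hβ := betaIdx_eq_sepWeight hd hw_compl hw hwc
  obtain ⟨a₀, ha₀⟩ := hA
  obtain ⟨b₀, hb₀⟩ := hAc
  rw [isolIdx]
  obtain ⟨x, hx⟩ := exists_isLeast_of_two_mul_int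
    (S := {r | ∃ a ∈ A, ∃ a' ∈ A, ∃ b ∈ Aᶜ, ∃ b' ∈ Aᶜ, r = betaIdx d a a' b b'})
    ⟨_, a₀, ha₀, a₀, ha₀, b₀, hb₀, b₀, hb₀, rfl⟩
    (by rintro _ ⟨a, -, a', -, b, -, b', -, rfl⟩; rw [hβ]; exact sepWeight_nonneg hw a a' b b')
    (by rintro _ ⟨a, -, a', -, b, -, b', -, rfl⟩; exact hint.exists_two_mul_betaIdx a a' b b')
  obtain ⟨a, ha, a', ha', b, hb, b', hb', rfl⟩ := hx.1
  have hmin : ∀ a₁ ∈ A, ∀ a₁' ∈ A, ∀ b₁ ∈ Aᶜ, ∀ b₁' ∈ Aᶜ,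
      sepWeight w a a' b b' ≤ sepWeight w a₁ a₁' b₁ b₁' := by
    intro a₁ ha₁ a₁' ha₁' b₁ hb₁ b₁' hb₁'
    simpa only [hβ] using hx.2 ⟨a₁, ha₁, a₁', ha₁', b₁, hb₁, b₁', hb₁', rfl⟩
  rw [hx.csInf_eq, hβ]
  exact tsum_indicator_eq_of_support_inter_subset ⟨ha, ha', hb, hb'⟩ fun C hC =>
    eq_of_sepWeight_le hd hw hwc hw_compl ha ha' hb hb' hmin hC.1 hC.2

end

end

theorem statement8 (𝒮 : Set (Set X))
    (hsplit : ∀ A ∈ 𝒮, IsSplit A Aᶜ)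
    (hcompl : ∀ A ∈ 𝒮, Aᶜ ∈ 𝒮)
    (hwc : ¬ ∃ (x₀ : X) (x : Fin 3 → X) (T : Fin 3 → Set X),
      (∀ i, T i ∈ 𝒮) ∧ ∀ i j, ((x₀ ∈ T i ↔ x j ∈ T i) ↔ i = j))
    (lam : Set X → ℝ) (hpos : ∀ A ∈ 𝒮, 0 < lam A) (hsymm : ∀ A ∈ 𝒮, lam A = lam Aᶜ)
    (d : X → X → ℝ)
    (hsum : ∀ x y : X,
      HasSum (fun A : {A : Set X // A ∈ 𝒮 ∧ x ∈ A ∧ y ∉ A} => lam A.1) (d x y))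
    (hnat : ∀ x y, ∃ n : ℕ, d x y = (n : ℝ)) :
    IsPseudometric d ∧ (∀ A : Set X, A ∈ 𝒮 ↔ IsDSplit d A Aᶜ) ∧
      ∀ A ∈ 𝒮, isolIdx d A Aᶜ = lam A := by
  set w := 𝒮.indicator lam with hw_def
  have hw : 0 ≤ w := indicator_nonneg fun A hA => (hpos A hA).le
  have hw_compl : ∀ A, w Aᶜ = w A := by
    intro A
    by_cases hA : A ∈ 𝒮
    · rw [hw_def, indicator_of_mem (hcompl A hA), indicator_of_mem hA, hsymm A hA]
    · have hAc : Aᶜ ∉ 𝒮 := fun h => hA (compl_compl A ▸ hcompl _ h)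
      rw [hw_def, indicator_of_notMem hAc, indicator_of_notMem hA]
  have hsupp : support w = 𝒮 :=
    support_indicator.trans (inter_eq_left.mpr fun A hA => (hpos A hA).ne')
  have hd : ∀ x y, HasSum ((splitsBetween x x y y).indicator w) (d x y) := by
    intro x y
    have hset : splitsBetween x x y y ∩ 𝒮 = {A | A ∈ 𝒮 ∧ x ∈ A ∧ y ∉ A} := by
      ext A
      simp only [splitsBetween, mem_inter_iff, mem_ofPred_eq]
      tauto
    rw [indicator_indicator, hset]
    exact hasSum_subtype_iff_indicator.mp (hsum x y)
  have hint : IsIntegerValued d := fun x y => by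
    obtain ⟨n, hn⟩ := hnat x y
    exact ⟨n, by rw [hn, Int.cast_natCast]⟩
  have hiso : ∀ A : Set X, A.Nonempty → Aᶜ.Nonempty → isolIdx d A Aᶜ = w A :=
    fun A => isolIdx_compl_eq hd hw (hsupp ▸ hwc) hw_compl hint
  have hsplit_iso : ∀ A ∈ 𝒮, isolIdx d A Aᶜ = lam A := fun A hA =>
    (hiso A (hsplit A hA).1.1 (hsplit A hA).1.2.1).trans (indicator_of_mem hA lam)
  refine ⟨isPseudometric_of_hasSum hd hw hw_compl, fun A => ⟨fun hA => ?_, fun hA => ?_⟩, hsplit_iso⟩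
  · exact ⟨hsplit A hA, (hsplit_iso A hA).symm ▸ hpos A hA⟩
  · rw [← hsupp, mem_support, ← hiso A hA.1.1.1 hA.1.1.2.1]
    exact hA.2.ne'
end
end

section
/- Let (X,d) be a metric space with integer-valued metric satisfying the local rank condition. Let S = {A,B} be a split of X and λ > 0, and set d₁ := d − λ·δ_S. If Δ(X,d) equals the Minkowski sum Δ(X,d₁) + λ·Δ(X,δ_S) (i.e. every f ∈ Δ(X,d) can be written f = f₁ + λ·f_S with f₁ ∈ Δ(X,d₁) and f_S ∈ Δ(X,δ_S), and conversely every such sum lies in Δ(X,d)), then S is a d-split of X and λ ≤ α^d_S. -/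
open Set Function

noncomputable section

variable {X : Type*}

/-- `Δ(X, ρ)`: functions with `f x + f y ≥ ρ x y` for all `x, y`. -/
def DeltaSet (ρ : X → X → ℝ) : Set (X → ℝ) := {f | ∀ x y, ρ x y ≤ f x + f y}

/-- Isbell's injective hull `E(X, d)`: the extremal functions, i.e. those with
`f x = sup_y (d x y - f y)` for every `x`. -/
def ExtSet (d : X → X → ℝ) : Set (X → ℝ) :=
  {f | ∀ x, IsLUB {r : ℝ | ∃ y, r = d x y - f y} (f x)}

/-- `E'(X, d)`: elements of `Δ(X, d)` such that every point lies in some pair of `A(f)`. -/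
def ExtSet' (d : X → X → ℝ) : Set (X → ℝ) :=
  {f | f ∈ DeltaSet d ∧ ∀ x, ∃ y, f x + f y = d x y}

/-- The set `A(f)` of (ordered) pairs where equality holds. -/
def eqSet (d : X → X → ℝ) (f : X → ℝ) : Set (X × X) := {p | f p.1 + f p.2 = d p.1 p.2}

/-- The direction space of the affine subspace `H(A)`; its dimension is `rank A`. -/
def dirSubmodule (A : Set (X × X)) : Submodule ℝ (X → ℝ) where
  carrier := {h | ∀ p ∈ A, h p.1 + h p.2 = 0}
  add_mem' := by
    intro a b ha hb p hp
    have h1 := ha p hp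
    have h2 := hb p hp
    simp only [Pi.add_apply]
    linarith
  zero_mem' := by intro p _; simp
  smul_mem' := by
    intro c a ha p hp
    have h1 := ha p hp
    simp only [Pi.smul_apply, smul_eq_mul]
    linear_combination c * h1

/-- The local rank condition. -/
def LRC (d : X → X → ℝ) : Prop :=
  ∀ f ∈ ExtSet d, ∃ ε : ℝ, 0 < ε ∧ ∃ N : ℕ,
    ∀ g ∈ ExtSet' d, (∀ x, |f x - g x| < ε) →
      Module.rank ℝ (dirSubmodule (eqSet d g)) ≤ (N : Cardinal)

/-- `d` is totally split-decomposable: `d = ∑_{S a d-split} α_S δ_S`, where each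
separating `d`-split `{A, Aᶜ}` is counted once via its part `A` containing `x`. -/
def TSD (d : X → X → ℝ) : Prop :=
  ∀ x y, d x y = ∑ᶠ A ∈ {A : Set X | IsDSplit d A Aᶜ ∧ x ∈ A ∧ y ∉ A}, isolIdx d A Aᶜ

/-- The cell `[f]` of `f ∈ E(X,d)`: all `g ∈ Δ(X,d)` with `A(f) ⊆ A(g)`. -/
def cellOf (d : X → X → ℝ) (f : X → ℝ) : Set (X → ℝ) :=
  {g | g ∈ DeltaSet d ∧ ∀ x y, f x + f y = d x y → g x + g y = d x y}

/-- On four points with `d x₁ y₁ + d x₂ y₂` the maximum matching value, there is an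
element of `Δ(X,d)` whose sum over the four points is at most that value. -/
lemma exists_delta_fn (d : X → X → ℝ) (h0 : ∀ x, d x x = 0)
    (hsym : ∀ x y, d x y = d y x) (htr : ∀ x y z, d x z ≤ d x y + d y z)
    (x₁ y₁ x₂ y₂ : X)
    (hm1 : d x₁ x₂ + d y₁ y₂ ≤ d x₁ y₁ + d x₂ y₂)
    (hm2 : d x₁ y₂ + d x₂ y₁ ≤ d x₁ y₁ + d x₂ y₂) :
    ∃ f ∈ DeltaSet d, f x₁ + f y₁ + f x₂ + f y₂ ≤ d x₁ y₁ + d x₂ y₂ := by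
  have hnn : ∀ x y, 0 ≤ d x y := by
    intro x y
    have h1 := htr x y x
    have h2 := h0 x
    have h3 := hsym y x
    linarith
  set D1 := d x₁ y₁ with hD1
  set D2 := d x₂ y₂ with hD2
  set w₀ := d x₁ y₂ - D2 with hw₀
  set t := max 0 (max w₀ ((d x₁ x₂ + w₀) / 2)) with htdef
  set s := t - w₀ with hsdef
  have ht0 : (0:ℝ) ≤ t := le_max_left _ _
  have htw : w₀ ≤ t := le_trans (le_max_left _ _) (le_max_right _ _)
  have htq : (d x₁ x₂ + w₀) / 2 ≤ t := le_trans (le_max_right _ _) (le_max_right _ _)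
  have htu1 : t ≤ D1 := by
    apply max_le
    · exact hnn x₁ y₁
    apply max_le
    · have := hnn x₂ y₁; linarith
    · have tA : d x₂ y₂ ≤ d x₂ y₁ + d y₁ y₂ := htr x₂ y₁ y₂
      linarith
  have htu2 : t ≤ d x₁ y₂ := by
    apply max_le
    · exact hnn x₁ y₂
    apply max_le
    · have := hnn x₂ y₂; linarith
    · have tA : d x₁ x₂ ≤ d x₁ y₂ + d y₂ x₂ := htr x₁ y₂ x₂
      have tB := hsym y₂ x₂
      linarith
  have htu3 : t ≤ (D1 + D2 - d y₁ y₂ + w₀) / 2 := by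
    apply max_le
    · have tA : d y₁ y₂ ≤ d y₁ x₁ + d x₁ y₂ := htr y₁ x₁ y₂
      have tB := hsym y₁ x₁
      linarith
    apply max_le
    · have tA : d y₁ y₂ ≤ d y₁ x₂ + d x₂ y₂ := htr y₁ x₂ y₂
      have tB := hsym y₁ x₂
      linarith
    · linarith
  -- the ten pair bounds for values t, D1 - t, s, D2 - s on x₁, y₁, x₂, y₂
  have pb11 : d x₁ x₁ ≤ t + t := by rw [h0]; linarith
  have pb12 : d x₁ y₁ ≤ t + (D1 - t) := by linarith
  have pb13 : d x₁ x₂ ≤ t + s := by linarith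
  have pb14 : d x₁ y₂ ≤ t + (D2 - s) := by linarith
  have pb22 : d y₁ y₁ ≤ (D1 - t) + (D1 - t) := by rw [h0]; linarith
  have pb23 : d y₁ x₂ ≤ (D1 - t) + s := by
    have tB := hsym y₁ x₂; linarith
  have pb24 : d y₁ y₂ ≤ (D1 - t) + (D2 - s) := by linarith
  have pb33 : d x₂ x₂ ≤ s + s := by rw [h0]; linarith
  have pb34 : d x₂ y₂ ≤ s + (D2 - s) := by linarith
  have pb44 : d y₂ y₂ ≤ (D2 - s) + (D2 - s) := by rw [h0]; linarith
  have pb21 : d y₁ x₁ ≤ (D1 - t) + t := by rw [hsym y₁ x₁]; linarith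
  have pb31 : d x₂ x₁ ≤ s + t := by rw [hsym x₂ x₁]; linarith
  have pb41 : d y₂ x₁ ≤ (D2 - s) + t := by rw [hsym y₂ x₁]; linarith
  have pb32 : d x₂ y₁ ≤ s + (D1 - t) := by rw [hsym x₂ y₁]; linarith
  have pb42 : d y₂ y₁ ≤ (D2 - s) + (D1 - t) := by rw [hsym y₂ y₁]; linarith
  have pb43 : d y₂ x₂ ≤ (D2 - s) + s := by rw [hsym y₂ x₂]; linarith
  refine ⟨fun z => min (min (d z x₁ + t) (d z y₁ + (D1 - t)))
      (min (d z x₂ + s) (d z y₂ + (D2 - s))), ?_, ?_⟩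
  · intro x y
    have H : ∀ p q cp cq, d p q ≤ cp + cq → d x y ≤ d x p + cp + (d y q + cq) := by
      intro p q cp cq hpq
      have a1 : d x y ≤ d x p + d p y := htr x p y
      have a2 : d p y ≤ d p q + d q y := htr p q y
      have a3 : d q y = d y q := hsym q y
      linarith
    have hmin : ∀ z : X, min (min (d z x₁ + t) (d z y₁ + (D1 - t)))
        (min (d z x₂ + s) (d z y₂ + (D2 - s))) = d z x₁ + t ∨
        min (min (d z x₁ + t) (d z y₁ + (D1 - t)))
        (min (d z x₂ + s) (d z y₂ + (D2 - s))) = d z y₁ + (D1 - t) ∨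
        min (min (d z x₁ + t) (d z y₁ + (D1 - t)))
        (min (d z x₂ + s) (d z y₂ + (D2 - s))) = d z x₂ + s ∨
        min (min (d z x₁ + t) (d z y₁ + (D1 - t)))
        (min (d z x₂ + s) (d z y₂ + (D2 - s))) = d z y₂ + (D2 - s) := by
      intro z
      rcases min_choice (min (d z x₁ + t) (d z y₁ + (D1 - t)))
          (min (d z x₂ + s) (d z y₂ + (D2 - s))) with h | h
      · rcases min_choice (d z x₁ + t) (d z y₁ + (D1 - t)) with h' | h'
        · exact Or.inl (h.trans h')
        · exact Or.inr (Or.inl (h.trans h'))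
      · rcases min_choice (d z x₂ + s) (d z y₂ + (D2 - s)) with h' | h'
        · exact Or.inr (Or.inr (Or.inl (h.trans h')))
        · exact Or.inr (Or.inr (Or.inr (h.trans h')))
    beta_reduce
    rcases hmin x with hx | hx | hx | hx <;> rcases hmin y with hy | hy | hy | hy <;>
        rw [hx, hy] <;>
      first
        | exact H x₁ x₁ t t pb11
        | exact H x₁ y₁ t (D1 - t) pb12
        | exact H x₁ x₂ t s pb13
        | exact H x₁ y₂ t (D2 - s) pb14
        | exact H y₁ x₁ (D1 - t) t pb21
        | exact H y₁ y₁ (D1 - t) (D1 - t) pb22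
        | exact H y₁ x₂ (D1 - t) s pb23
        | exact H y₁ y₂ (D1 - t) (D2 - s) pb24
        | exact H x₂ x₁ s t pb31
        | exact H x₂ y₁ s (D1 - t) pb32
        | exact H x₂ x₂ s s pb33
        | exact H x₂ y₂ s (D2 - s) pb34
        | exact H y₂ x₁ (D2 - s) t pb41
        | exact H y₂ y₁ (D2 - s) (D1 - t) pb42
        | exact H y₂ x₂ (D2 - s) s pb43
        | exact H y₂ y₂ (D2 - s) (D2 - s) pb44
  · have f1 : min (min (d x₁ x₁ + t) (d x₁ y₁ + (D1 - t)))
        (min (d x₁ x₂ + s) (d x₁ y₂ + (D2 - s))) ≤ t := by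
      refine le_trans (le_trans (min_le_left _ _) (min_le_left _ _)) ?_
      rw [h0]; linarith
    have f2 : min (min (d y₁ x₁ + t) (d y₁ y₁ + (D1 - t)))
        (min (d y₁ x₂ + s) (d y₁ y₂ + (D2 - s))) ≤ D1 - t := by
      refine le_trans (le_trans (min_le_left _ _) (min_le_right _ _)) ?_
      rw [h0]; linarith
    have f3 : min (min (d x₂ x₁ + t) (d x₂ y₁ + (D1 - t)))
        (min (d x₂ x₂ + s) (d x₂ y₂ + (D2 - s))) ≤ s := by
      refine le_trans (le_trans (min_le_right _ _) (min_le_left _ _)) ?_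
      rw [h0]; linarith
    have f4 : min (min (d y₂ x₁ + t) (d y₂ y₁ + (D1 - t)))
        (min (d y₂ x₂ + s) (d y₂ y₂ + (D2 - s))) ≤ D2 - s := by
      refine le_trans (le_trans (min_le_right _ _) (min_le_right _ _)) ?_
      rw [h0]; linarith
    simp only []
    linarith

theorem statement9 (d : X → X → ℝ) (hmet : IsMetric d) (hint : IsIntegerValued d)
    (hlrc : LRC d) (A B : Set X) (hS : IsSplit A B) (lam : ℝ) (hlam : 0 < lam)
    (hdelta : DeltaSet d =
      {f : X → ℝ | ∃ f₁ ∈ DeltaSet (fun x y => d x y - lam * splitDist A x y),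
        ∃ g ∈ DeltaSet (splitDist A), f = fun x => f₁ x + lam * g x}) :
    IsDSplit d A B ∧ lam ≤ isolIdx d A B := by
  obtain ⟨⟨h0, hsym, htr⟩, _⟩ := id hmet
  obtain ⟨⟨hAne, hBne, hdisj⟩, huniv⟩ := id hS
  -- Key: for every f ∈ Δ(d), the sum on a quadruple dominates 2λ + d a a' + d b b'
  have key : ∀ a ∈ A, ∀ a' ∈ A, ∀ b ∈ B, ∀ b' ∈ B, ∀ f ∈ DeltaSet d,
      2 * lam + d a a' + d b b' ≤ f a + f a' + f b + f b' := by
    intro a ha a' ha' b hb b' hb' f hf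
    rw [hdelta] at hf
    obtain ⟨f₁, hf₁, g, hg, rfl⟩ := hf
    have hbA : b ∉ A := fun h => Set.disjoint_left.mp hdisj h hb
    have hb'A : b' ∉ A := fun h => Set.disjoint_left.mp hdisj h hb'
    have d1 : splitDist A a b' = 1 := by
      simp only [splitDist]; rw [if_neg]; intro h; exact hb'A (h.mp ha)
    have d2 : splitDist A a' b = 1 := by
      simp only [splitDist]; rw [if_neg]; intro h; exact hbA (h.mp ha')
    have d3 : splitDist A a a' = 0 := by
      simp only [splitDist]; rw [if_pos (iff_of_true ha ha')]
    have d4 : splitDist A b b' = 0 := by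
      simp only [splitDist]; rw [if_pos (iff_of_false hbA hb'A)]
    have e1 : splitDist A a b' ≤ g a + g b' := hg a b'
    have e2 : splitDist A a' b ≤ g a' + g b := hg a' b
    have e3 : d a a' - lam * splitDist A a a' ≤ f₁ a + f₁ a' := hf₁ a a'
    have e4 : d b b' - lam * splitDist A b b' ≤ f₁ b + f₁ b' := hf₁ b b'
    rw [d1] at e1
    rw [d2] at e2
    rw [d3, mul_zero, sub_zero] at e3
    rw [d4, mul_zero, sub_zero] at e4
    have hsum : (2:ℝ) ≤ g a + g a' + g b + g b' := by linarith
    have hmul : lam * 2 ≤ lam * (g a + g a' + g b + g b') :=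
      mul_le_mul_of_nonneg_left hsum hlam.le
    show 2 * lam + d a a' + d b b' ≤
      (f₁ a + lam * g a) + (f₁ a' + lam * g a') + (f₁ b + lam * g b) + (f₁ b' + lam * g b')
    have expand : lam * (g a + g a' + g b + g b') =
        lam * g a + lam * g a' + lam * g b + lam * g b' := by ring
    linarith [hmul, expand ▸ hmul]
  have betalow : ∀ a ∈ A, ∀ a' ∈ A, ∀ b ∈ B, ∀ b' ∈ B, lam ≤ betaIdx d a a' b b' := by
    intro a ha a' ha' b hb b' hb'
    have hmax : 2 * lam + d a a' + d b b' ≤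
        max (max (d a b + d a' b') (d a' b + d a b')) (d a a' + d b b') := by
      have hmax1 : d a b + d a' b' ≤ max (max (d a b + d a' b') (d a' b + d a b'))
          (d a a' + d b b') := le_trans (le_max_left _ _) (le_max_left _ _)
      have hmax2 : d a' b + d a b' ≤ max (max (d a b + d a' b') (d a' b + d a b'))
          (d a a' + d b b') := le_trans (le_max_right _ _) (le_max_left _ _)
      have hmax3 : d a a' + d b b' ≤ max (max (d a b + d a' b') (d a' b + d a b'))
          (d a a' + d b b') := le_max_right _ _
      rcases le_total (d a b + d a' b') (d a' b + d a b') with h12 | h12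
      · rcases le_total (d a' b + d a b') (d a a' + d b b') with h23 | h23
        · -- C3 is max; this case is impossible, derive contradiction
          obtain ⟨f, hfD, hfsum⟩ := exists_delta_fn d h0 hsym htr a a' b b'
            (by linarith) (by linarith [hsym b a'])
          have hk := key a ha a' ha' b hb b' hb' f hfD
          linarith
        · -- C2 is max
          obtain ⟨f, hfD, hfsum⟩ := exists_delta_fn d h0 hsym htr a b' a' b
            (by linarith [hsym b' b]) (by linarith)
          have hk := key a ha a' ha' b hb b' hb' f hfD
          linarith
      · rcases le_total (d a b + d a' b') (d a a' + d b b') with h13 | h13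
        · -- C3 is max; impossible
          obtain ⟨f, hfD, hfsum⟩ := exists_delta_fn d h0 hsym htr a a' b b'
            (by linarith) (by linarith [hsym b a'])
          have hk := key a ha a' ha' b hb b' hb' f hfD
          linarith
        · -- C1 is max
          obtain ⟨f, hfD, hfsum⟩ := exists_delta_fn d h0 hsym htr a b a' b'
            (by linarith) (by linarith)
          have hk := key a ha a' ha' b hb b' hb' f hfD
          linarith
    unfold betaIdx
    linarith
  obtain ⟨a0, ha0⟩ := hAne
  obtain ⟨b0, hb0⟩ := hBne
  have hle : lam ≤ isolIdx d A B := by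
    apply le_csInf
    · exact ⟨betaIdx d a0 a0 b0 b0, a0, ha0, a0, ha0, b0, hb0, b0, hb0, rfl⟩
    · rintro r ⟨a, ha, a', ha', b, hb, b', hb', rfl⟩
      exact betalow a ha a' ha' b hb b' hb'
  exact ⟨⟨hS, lt_of_lt_of_le hlam hle⟩, hle⟩
end
end
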